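/- arXiv:1908.00083 — 5 statements merged into one kernel-verified Lean document; each statement's English description precedes it below -/
import Mathlib

section
/- (q-Lucas theorem) Let n, k, d be natural numbers with d ≥ 1, and write n = n₁d + n₀, k = k₁d + k₀ with 0 ≤ n₀, k₀ ≤ d−1. Then the Gaussian binomial coefficient [n choose k]_q is congruent to (n₁ choose k₁)·[n₀ choose k₀]_q modulo the d-th cyclotomic polynomial Φ_d(q). In particular, if ξ is a primitive d-th root of unity, [n choose k]_ξ = (n₁ choose k₁)·[n₀ choose k₀]_ξ. -/
open Polynomial

/-- The Gaussian binomial coefficient `[n choose k]_q` as a polynomial in `ℤ[q]`,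
defined via the `q`-Pascal recurrence
`[n+1 choose k+1]_q = [n choose k]_q + q^(k+1) [n choose k+1]_q`,
which is equivalent to `[n]_q! / ([k]_q! [n-k]_q!)`. -/
noncomputable def qbinom : ℕ → ℕ → Polynomial ℤ
  | _, 0 => 1
  | 0, _ + 1 => 0
  | n + 1, k + 1 => qbinom n k + Polynomial.X ^ (k + 1) * qbinom n (k + 1)

/-!
At a primitive `d`-th root of unity `ξ` the `q`-integer `[d]_ξ` vanishes while `[m]_ξ ≠ 0` for
`0 < m < d`, so the factorial formula forces `[d choose j]_ξ = 0` for `0 < j < d`. Feeding this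
and `ξ ^ d = 1` into the `q`-Pascal recurrence gives
`[m + d choose k]_ξ = [m choose k]_ξ + [m choose k - d]_ξ` (the last term only when `d ≤ k`),
which is Pascal's rule for the ordinary binomial coefficient in the quotients `n / d`, `k / d`;
induction on `n` gives the evaluation at `ξ`. Since `Φ_d` is the minimal polynomial of `e^{2πi/d}`, the congruence follows.
-/

open Finset

lemma qbinom_zero_right (n : ℕ) : qbinom n 0 = 1 := by
  cases n <;> rfl

lemma qbinom_succ_succ (n k : ℕ) :
    qbinom (n + 1) (k + 1) = qbinom n k + X ^ (k + 1) * qbinom n (k + 1) := rfl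

lemma qbinom_eq_zero_of_lt {n k : ℕ} (h : n < k) : qbinom n k = 0 := by
  induction n generalizing k with
  | zero => obtain ⟨k, rfl⟩ := Nat.exists_eq_succ_of_ne_zero h.ne'; rfl
  | succ n ih =>
    obtain ⟨k, rfl⟩ := Nat.exists_eq_succ_of_ne_zero (Nat.ne_zero_of_lt h)
    rw [qbinom_succ_succ, ih (by omega), ih (by omega), mul_zero, add_zero]

lemma qbinom_self (n : ℕ) : qbinom n n = 1 := by
  induction n with
  | zero => rfl
  | succ n ih => rw [qbinom_succ_succ, ih, qbinom_eq_zero_of_lt n.lt_succ_self, mul_zero, add_zero]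

noncomputable def qInt (m : ℕ) : ℤ[X] := ∑ i ∈ range m, X ^ i

noncomputable def qFactorial (m : ℕ) : ℤ[X] := ∏ i ∈ range m, qInt (i + 1)

lemma qInt_add (a b : ℕ) : qInt (a + b) = qInt a + X ^ a * qInt b := by
  simp only [qInt, sum_range_add, mul_sum, pow_add]

lemma qFactorial_succ (m : ℕ) : qFactorial (m + 1) = qFactorial m * qInt (m + 1) :=
  prod_range_succ _ _

lemma qbinom_mul_qFactorial (k l : ℕ) :
    qbinom (k + l) k * (qFactorial k * qFactorial l) = qFactorial (k + l) := by
  induction k generalizing l with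
  | zero => simp [qbinom_zero_right, qFactorial]
  | succ k ihk =>
    induction l with
    | zero => simp [qbinom_self, qFactorial]
    | succ l ihl =>
      have hk := ihk (l + 1)
      rw [show k + (l + 1) = k + l + 1 by omega, qFactorial_succ l] at hk
      rw [show k + 1 + l = k + l + 1 by omega, qFactorial_succ k] at ihl
      rw [show k + 1 + (l + 1) = k + l + 1 + 1 by omega, qbinom_succ_succ, qFactorial_succ (k + l + 1),
        show k + l + 1 + 1 = k + 1 + (l + 1) by omega, qInt_add, qFactorial_succ k, qFactorial_succ l]
      linear_combination qInt (k + 1) * hk + X ^ (k + 1) * qInt (l + 1) * ihl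

section PrimitiveRoot

variable {R : Type*} [CommRing R]

lemma aeval_qInt_mul_sub_one (ξ : R) (m : ℕ) : aeval ξ (qInt m) * (ξ - 1) = ξ ^ m - 1 := by
  simpa [qInt] using geom_sum_mul ξ m

lemma aeval_qbinom_succ_succ (ξ : R) (n k : ℕ) :
    aeval ξ (qbinom (n + 1) (k + 1)) =
      aeval ξ (qbinom n k) + ξ ^ (k + 1) * aeval ξ (qbinom n (k + 1)) := by
  simp [qbinom_succ_succ]

variable {ξ : R} {d : ℕ}

lemma IsPrimitiveRoot.aeval_qInt_ne_zero (hξ : IsPrimitiveRoot ξ d) {m : ℕ} (hm : 0 < m)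
    (hmd : m < d) : aeval ξ (qInt m) ≠ 0 := by
  intro h
  have := aeval_qInt_mul_sub_one ξ m
  rw [h, zero_mul, eq_comm, sub_eq_zero] at this
  exact hξ.pow_ne_one_of_pos_of_lt hm.ne' hmd this

variable [IsDomain R]

lemma IsPrimitiveRoot.aeval_qFactorial_ne_zero (hξ : IsPrimitiveRoot ξ d) {m : ℕ} (hmd : m < d) :
    aeval ξ (qFactorial m) ≠ 0 := by
  rw [qFactorial, map_prod]
  exact prod_ne_zero_iff.2 fun i hi ↦
    hξ.aeval_qInt_ne_zero i.succ_pos (by rw [mem_range] at hi; omega)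

lemma IsPrimitiveRoot.aeval_qFactorial_eq_zero (hξ : IsPrimitiveRoot ξ d) (hd : 1 < d) :
    aeval ξ (qFactorial d) = 0 := by
  obtain ⟨m, rfl⟩ := Nat.exists_eq_succ_of_ne_zero (by omega : d ≠ 0)
  rw [qFactorial_succ, map_mul, qInt]
  simp only [map_sum, map_pow, aeval_X]
  rw [hξ.geom_sum_eq_zero hd, mul_zero]

lemma IsPrimitiveRoot.aeval_qbinom_order_eq_zero (hξ : IsPrimitiveRoot ξ d) {j : ℕ} (hj : 0 < j)
    (hjd : j < d) : aeval ξ (qbinom d j) = 0 := by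
  have h := congrArg (aeval ξ) (qbinom_mul_qFactorial j (d - j))
  rw [Nat.add_sub_cancel' hjd.le, map_mul, map_mul, hξ.aeval_qFactorial_eq_zero (by omega)] at h
  exact (mul_eq_zero.1 h).resolve_right <|
    mul_ne_zero (hξ.aeval_qFactorial_ne_zero hjd) (hξ.aeval_qFactorial_ne_zero (by omega))

lemma IsPrimitiveRoot.aeval_qbinom_add_order (hξ : IsPrimitiveRoot ξ d) (hd : 0 < d) (m k : ℕ) :
    aeval ξ (qbinom (m + d) k) =
      aeval ξ (qbinom m k) + if d ≤ k then aeval ξ (qbinom m (k - d)) else 0 := by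
  induction m generalizing k with
  | zero =>
    rw [zero_add]
    rcases Nat.lt_trichotomy k d with hk | rfl | hk
    · rcases k.eq_zero_or_pos with rfl | hk0
      · simp [qbinom_zero_right, hd.not_ge]
      · simp [hξ.aeval_qbinom_order_eq_zero hk0 hk, qbinom_eq_zero_of_lt hk0, hk.not_ge]
    · simp [qbinom_self, qbinom_eq_zero_of_lt hd]
    · simp [qbinom_eq_zero_of_lt hk, hk.le, qbinom_eq_zero_of_lt (by omega : 0 < k),
        qbinom_eq_zero_of_lt (by omega : 0 < k - d)]
  | succ m ih =>
    rcases k with _ | j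
    · simp [qbinom_zero_right, hd.not_ge]
    rw [show m + 1 + d = m + d + 1 by omega, aeval_qbinom_succ_succ, ih, ih,
      aeval_qbinom_succ_succ]
    rcases Nat.lt_trichotomy (j + 1) d with hj | hj | hj
    · simp only [if_neg (by omega : ¬d ≤ j), if_neg hj.not_ge]
      ring
    · subst hj
      simp only [if_neg (by omega : ¬j + 1 ≤ j), if_pos le_rfl, Nat.sub_self, qbinom_zero_right,
        hξ.pow_eq_one]
      ring
    · have hξj : ξ ^ (j + 1) = ξ ^ (j - d + 1) := by
        rw [show j + 1 = j - d + 1 + d by omega, pow_add, hξ.pow_eq_one, mul_one]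
      simp only [if_pos (by omega : d ≤ j), if_pos hj.le, show j + 1 - d = j - d + 1 by omega,
        aeval_qbinom_succ_succ, hξj]
      ring

lemma IsPrimitiveRoot.aeval_qbinom_eq_choose_mul (hξ : IsPrimitiveRoot ξ d) (n k : ℕ) :
    aeval ξ (qbinom n k) = ((n / d).choose (k / d) : R) * aeval ξ (qbinom (n % d) (k % d)) := by
  rcases d.eq_zero_or_pos with rfl | hd
  · simp
  induction n using Nat.strong_induction_on generalizing k with
  | _ n ih =>
  rcases lt_or_ge n d with hn | hn
  · rw [Nat.div_eq_of_lt hn, Nat.mod_eq_of_lt hn]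
    rcases lt_or_ge k d with hk | hk
    · simp [Nat.div_eq_of_lt hk, Nat.mod_eq_of_lt hk]
    · simp [qbinom_eq_zero_of_lt (hn.trans_le hk), Nat.choose_eq_zero_of_lt (Nat.div_pos hk hd)]
  obtain ⟨m, rfl⟩ := Nat.exists_eq_add_of_le' hn
  have hm : m < m + d := by omega
  rw [hξ.aeval_qbinom_add_order hd, ih m hm, Nat.add_div_right m hd, Nat.add_mod_right]
  rcases lt_or_ge k d with hk | hk
  · simp [hk.not_ge, Nat.div_eq_of_lt hk]
  obtain ⟨l, rfl⟩ := Nat.exists_eq_add_of_le' hk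
  rw [if_pos hk, Nat.add_sub_cancel, ih m hm, Nat.add_div_right l hd, Nat.add_mod_right,
    Nat.choose_succ_succ]
  push_cast
  ring

end PrimitiveRoot

theorem stmt1_general (n k d : ℕ) :
    (Polynomial.cyclotomic d ℤ ∣
      (qbinom n k - Polynomial.C (((n / d).choose (k / d) : ℤ)) * qbinom (n % d) (k % d))) ∧
    (∀ ξ : ℂ, IsPrimitiveRoot ξ d →
      Polynomial.aeval ξ (qbinom n k)
        = ((n / d).choose (k / d) : ℂ) * Polynomial.aeval ξ (qbinom (n % d) (k % d))) := by
  refine ⟨?_, fun ξ hξ ↦ hξ.aeval_qbinom_eq_choose_mul n k⟩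
  rcases d.eq_zero_or_pos with rfl | hd
  · simp
  have hξ : IsPrimitiveRoot (Complex.exp (2 * Real.pi * Complex.I / d)) d :=
    Complex.isPrimitiveRoot_exp d hd.ne'
  rw [cyclotomic_eq_minpoly hξ hd]
  refine minpoly.isIntegrallyClosed_dvd (hξ.isIntegral hd) ?_
  simp [hξ.aeval_qbinom_eq_choose_mul n k]

/-- The `q`-Lucas theorem: writing `n = n₁ d + n₀` and `k = k₁ d + k₀` with
`0 ≤ n₀, k₀ ≤ d - 1`, we have
`[n choose k]_q ≡ (n₁ choose k₁) ⬝ [n₀ choose k₀]_q  (mod Φ_d(q))`;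
in particular, for `ξ` a primitive `d`-th root of unity,
`[n choose k]_ξ = (n₁ choose k₁) ⬝ [n₀ choose k₀]_ξ`. -/
theorem stmt1 (n k d : ℕ) (hd : 1 ≤ d) :
    (Polynomial.cyclotomic d ℤ ∣
      (qbinom n k - Polynomial.C (((n / d).choose (k / d) : ℤ)) * qbinom (n % d) (k % d))) ∧
    (∀ ξ : ℂ, IsPrimitiveRoot ξ d →
      Polynomial.aeval ξ (qbinom n k)
        = ((n / d).choose (k / d) : ℂ) * Polynomial.aeval ξ (qbinom (n % d) (k % d))) :=
  stmt1_general n k d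
end

section
/- Let λ be a partition with ℓ parts and let S₁, ..., S_ℓ be subsets of [m] with |S_j| = λ_j. Then there is exactly one coinversion-free filling F of the conjugate shape λ' such that for each j the set of entries in column j of F equals S_j. -/
/-- Tie-broken inversion-triple condition for boxes `a` (immediately left of `b`),
`b`, and `c` (below `b` in the same column), with entries `z = F(a)`, `x = F(b)`,
`y = F(c)`.  The triple is an inversion-triple when the tie-broken values
`b₁, c₂, a₃` increase in one of the three counterclockwise cyclic orders
(on ties, the larger subscript counts as larger). -/
def InvTriple (z x y : ℕ) : Prop :=
  (x ≤ y ∧ y ≤ z) ∨ (y ≤ z ∧ z < x) ∨ (z < x ∧ x ≤ y)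

/-- `F : ℕ × ℕ → ℕ` (rows and columns indexed from `0`, English notation,
value `0` outside the diagram) is a coinversion-free filling of the Young
diagram `μ` with entries in `[m] = {1, …, m}`:  every triple is an
inversion-triple and the first column is strictly decreasing from top to
bottom. -/
def IsCOF (μ : YoungDiagram) (m : ℕ) (F : ℕ × ℕ → ℕ) : Prop :=
  (∀ c ∈ μ.cells, F c ∈ Finset.Icc 1 m) ∧
  (∀ c : ℕ × ℕ, c ∉ μ.cells → F c = 0) ∧
  (∀ i i' : ℕ, i < i' → (i', 0) ∈ μ.cells → F (i', 0) < F (i, 0)) ∧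
  (∀ i i' j : ℕ, i < i' → 0 < j → (i, j) ∈ μ.cells → (i', j) ∈ μ.cells →
    InvTriple (F (i, j - 1)) (F (i, j)) (F (i', j)))

/-- The set of entries in column `j` of the filling `F` of shape `μ`. -/
def colSetF (μ : YoungDiagram) (F : ℕ × ℕ → ℕ) (j : ℕ) : Finset ℕ :=
  (Finset.range (μ.colLen j)).image fun i => F (i, j)

def pick (z : ℕ) (R : Finset ℕ) : ℕ :=
  if h : (R.filter (fun s => z < s)).Nonempty then (R.filter (fun s => z < s)).min' h
  else if h2 : R.Nonempty then R.min' h2 else 0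

def pick0 (R : Finset ℕ) : ℕ := if h : R.Nonempty then R.max' h else 0

lemma pick_mem {z : ℕ} {R : Finset ℕ} (h : R.Nonempty) : pick z R ∈ R := by
  unfold pick
  split
  · next hf => exact Finset.mem_of_mem_filter _ (Finset.min'_mem _ hf)
  · exact Finset.min'_mem _ _

lemma pick0_mem {R : Finset ℕ} (h : R.Nonempty) : pick0 R ∈ R := by
  unfold pick0; rw [dif_pos h]; exact Finset.max'_mem _ h

lemma pick_inv {z : ℕ} {R : Finset ℕ} {y : ℕ} (hy : y ∈ R) :
    InvTriple z (pick z R) y := by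
  unfold pick
  split
  · next hf =>
    have hz : z < (R.filter (fun s => z < s)).min' hf := by
      have := Finset.min'_mem _ hf
      exact (Finset.mem_filter.mp this).2
    by_cases hzy : z < y
    · have : (R.filter (fun s => z < s)).min' hf ≤ y :=
        Finset.min'_le _ _ (Finset.mem_filter.mpr ⟨hy, hzy⟩)
      unfold InvTriple; omega
    · unfold InvTriple; omega
  · next hf =>
    have hyz : y ≤ z := by
      by_contra hc
      exact hf ⟨y, Finset.mem_filter.mpr ⟨hy, by omega⟩⟩
    have hne : R.Nonempty := ⟨y, hy⟩
    rw [dif_pos hne]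
    have : R.min' hne ≤ y := Finset.min'_le _ _ hy
    unfold InvTriple; omega

lemma invTriple_asymm {z x y : ℕ} (hxy : x ≠ y) (h1 : InvTriple z x y)
    (h2 : InvTriple z y x) : False := by
  unfold InvTriple at h1 h2; omega

lemma pick_unique {z : ℕ} {R : Finset ℕ} {x : ℕ} (hx : x ∈ R)
    (hall : ∀ y ∈ R, y ≠ x → InvTriple z x y) : x = pick z R := by
  by_contra hne
  have hp : pick z R ∈ R := pick_mem ⟨x, hx⟩
  exact invTriple_asymm (Ne.symm hne) (pick_inv hx) (hall _ hp (fun h => hne h.symm))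

lemma pick0_lt {R : Finset ℕ} {y : ℕ} (hy : y ∈ R) (hne : y ≠ pick0 R) :
    y < pick0 R := by
  unfold pick0 at *
  rw [dif_pos ⟨y, hy⟩] at *
  exact lt_of_le_of_ne (Finset.le_max' _ _ hy) hne

lemma pick0_unique {R : Finset ℕ} {x : ℕ} (hx : x ∈ R)
    (hall : ∀ y ∈ R, y ≠ x → y < x) : x = pick0 R := by
  have hp : pick0 R ∈ R := pick0_mem ⟨x, hx⟩
  by_contra hne
  have h1 := hall _ hp (fun h => hne h.symm)
  have h2 := pick0_lt hx hne
  omega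

/-- Remaining set after greedily placing `i` entries with selection rule `P`. -/
def remF (P : ℕ → Finset ℕ → ℕ) (S : Finset ℕ) : ℕ → Finset ℕ
  | 0 => S
  | i+1 => remF P S i \ {P i (remF P S i)}

/-- The entry placed in row `i`. -/
def entF (P : ℕ → Finset ℕ → ℕ) (S : Finset ℕ) (i : ℕ) : ℕ := P i (remF P S i)

lemma remF_subset (P : ℕ → Finset ℕ → ℕ) (S : Finset ℕ) : ∀ i, remF P S i ⊆ S
  | 0 => Finset.Subset.refl S
  | i+1 => subset_trans (Finset.sdiff_subset) (remF_subset P S i)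

lemma remF_mono (P : ℕ → Finset ℕ → ℕ) (S : Finset ℕ) {i i' : ℕ} (h : i ≤ i') :
    remF P S i' ⊆ remF P S i := by
  induction i' with
  | zero =>
    have : i = 0 := Nat.le_zero.mp h
    subst this; exact Finset.Subset.refl _
  | succ k ih =>
    rcases Nat.lt_or_ge i (k+1) with hlt | hge
    · intro x hx
      have hx' : x ∈ remF P S k \ {P k (remF P S k)} := hx
      exact ih (by omega) (Finset.mem_sdiff.mp hx').1
    · have : i = k+1 := by omega
      subst this; exact Finset.Subset.refl _

section
variable {P : ℕ → Finset ℕ → ℕ} {S : Finset ℕ}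
  (hP : ∀ i (R : Finset ℕ), R.Nonempty → P i R ∈ R)

include hP

lemma remF_card : ∀ i, i ≤ S.card → (remF P S i).card = S.card - i := by
  intro i
  induction i with
  | zero => simp [remF]
  | succ k ih =>
    intro h
    have hk := ih (by omega)
    have hne : (remF P S k).Nonempty := by
      rw [← Finset.card_pos, hk]; omega
    have hmem := hP k _ hne
    show (remF P S k \ {P k (remF P S k)}).card = _
    rw [Finset.sdiff_singleton_eq_erase, Finset.card_erase_of_mem hmem, hk]
    omega

lemma remF_nonempty {i : ℕ} (h : i < S.card) : (remF P S i).Nonempty := by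
  rw [← Finset.card_pos, remF_card hP i (by omega)]; omega

lemma entF_mem_rem {i : ℕ} (h : i < S.card) : entF P S i ∈ remF P S i :=
  hP i _ (remF_nonempty hP h)

lemma entF_mem {i : ℕ} (h : i < S.card) : entF P S i ∈ S :=
  remF_subset P S i (entF_mem_rem hP h)

lemma entF_later_mem {i i' : ℕ} (h : i < i') (h' : i' < S.card) :
    entF P S i' ∈ remF P S i \ {P i (remF P S i)} := by
  have : entF P S i' ∈ remF P S i' := entF_mem_rem hP h'
  exact remF_mono P S (by omega : i + 1 ≤ i') this

lemma entF_ne {i i' : ℕ} (h : i < i') (h' : i' < S.card) :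
    entF P S i' ≠ entF P S i := by
  have := entF_later_mem hP h h'
  rw [Finset.mem_sdiff, Finset.mem_singleton] at this
  exact this.2

lemma entF_image : (Finset.range S.card).image (entF P S) = S := by
  have hinj : Set.InjOn (entF P S) (Finset.range S.card) := by
    intro a ha b hb hab
    simp only [Finset.coe_range, Set.mem_Iio] at ha hb
    by_contra hne
    rcases Nat.lt_or_ge a b with hlt | hge
    · exact entF_ne hP hlt hb hab.symm
    · exact entF_ne hP (by omega : b < a) ha hab
  apply Finset.eq_of_subset_of_card_le
  · intro x hx
    rw [Finset.mem_image] at hx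
    obtain ⟨i, hi, rfl⟩ := hx
    exact entF_mem hP (Finset.mem_range.mp hi)
  · rw [Finset.card_image_of_injOn hinj, Finset.card_range]

/-- Uniqueness of the greedy placement: any assignment `v` of the elements of
`S` to rows `0, …, S.card - 1` such that `v i` is the unique `P`-choice among
the leftovers agrees with `entF`. -/
lemma entF_unique (v : ℕ → ℕ)
    (himg : (Finset.range S.card).image v = S)
    (hsel : ∀ i, i < S.card → ∀ R : Finset ℕ, v i ∈ R →
      (∀ y ∈ R, y ≠ v i → ∃ i', i < i' ∧ i' < S.card ∧ y = v i') → v i = P i R) :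
    ∀ i, remF P S i = S \ (Finset.range i).image v ∧
      (i < S.card → v i = entF P S i) := by
  have hinj : Set.InjOn v (Finset.range S.card) := by
    have : ((Finset.range S.card).image v).card = (Finset.range S.card).card := by
      rw [himg, Finset.card_range]
    exact Finset.injOn_of_card_image_eq this
  have hstep : ∀ i, remF P S i = S \ (Finset.range i).image v → i < S.card →
      v i = entF P S i := by
    intro i hR hi
    have hviS : v i ∈ S := by
      rw [← himg]; exact Finset.mem_image_of_mem v (Finset.mem_range.mpr hi)
    have hviR : v i ∈ remF P S i := by
      rw [hR, Finset.mem_sdiff]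
      refine ⟨hviS, ?_⟩
      intro hc
      rw [Finset.mem_image] at hc
      obtain ⟨i0, hi0, heq⟩ := hc
      rw [Finset.mem_range] at hi0
      have := hinj (by simp; omega) (by simp [hi]) heq
      omega
    refine hsel i hi _ hviR ?_
    intro y hy hyne
    rw [hR, Finset.mem_sdiff] at hy
    obtain ⟨hyS, hynotin⟩ := hy
    rw [← himg, Finset.mem_image] at hyS
    obtain ⟨i', hi', rfl⟩ := hyS
    rw [Finset.mem_range] at hi'
    refine ⟨i', ?_, hi', rfl⟩
    rcases Nat.lt_or_ge i i' with h | h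
    · exact h
    · exfalso
      rcases Nat.lt_or_ge i' i with h2 | h2
      · exact hynotin (Finset.mem_image_of_mem v (Finset.mem_range.mpr h2))
      · exact hyne (by rw [show i' = i by omega])
  intro i
  induction i with
  | zero => exact ⟨by simp [remF], fun h => hstep 0 (by simp [remF]) h⟩
  | succ k ih =>
    have hRk := ih.1
    have hR1 : remF P S (k+1) = S \ (Finset.range (k+1)).image v := by
      show remF P S k \ {P k (remF P S k)} = _
      rcases Nat.lt_or_ge k S.card with hk | hk
      · have hvk : v k = P k (remF P S k) := ih.2 hk
        rw [← hvk, hRk, Finset.range_add_one, Finset.image_insert]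
        ext a
        simp only [Finset.mem_sdiff, Finset.mem_singleton, Finset.mem_insert]
        tauto
      · have h1 : remF P S k = ∅ := by
          have := remF_mono P S hk (i := S.card)
          have hc := remF_card hP S.card (le_refl _)
          simp only [Nat.sub_self] at hc
          have : remF P S k ⊆ remF P S S.card := remF_mono P S hk
          rw [Finset.card_eq_zero] at hc
          rw [hc] at this
          exact Finset.subset_empty.mp this
        have h2 : S \ (Finset.range (k+1)).image v = ∅ := by
          rw [Finset.sdiff_eq_empty_iff_subset, ← himg]
          exact Finset.image_subset_image (Finset.range_subset_range.mpr (by omega))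
        rw [h1, h2]
        simp
    exact ⟨hR1, hstep (k+1) hR1⟩

end

/-! ### The filling -/

def P0 : ℕ → Finset ℕ → ℕ := fun _ R => pick0 R

def Pc (g : ℕ → ℕ) : ℕ → Finset ℕ → ℕ := fun i R => pick (g i) R

lemma P0_mem : ∀ i (R : Finset ℕ), R.Nonempty → P0 i R ∈ R := fun _ _ h => pick0_mem h

lemma Pc_mem (g : ℕ → ℕ) : ∀ i (R : Finset ℕ), R.Nonempty → Pc g i R ∈ R :=
  fun _ _ h => pick_mem h

def colVals (S : ℕ → Finset ℕ) : ℕ → ℕ → ℕ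
  | 0 => entF P0 (S 0)
  | j+1 => entF (Pc (colVals S j)) (S (j+1))

def fillF (μ : YoungDiagram) (S : ℕ → Finset ℕ) : ℕ × ℕ → ℕ :=
  fun c => if c ∈ μ.cells then colVals S c.2 c.1 else 0

lemma colVals_mem (S : ℕ → Finset ℕ) (j i : ℕ) (h : i < (S j).card) :
    colVals S j i ∈ S j := by
  cases j with
  | zero => exact entF_mem P0_mem h
  | succ j => exact entF_mem (Pc_mem _) h

lemma fillF_eq {μ : YoungDiagram} {S : ℕ → Finset ℕ} {i j : ℕ}
    (h : (i, j) ∈ μ.cells) : fillF μ S (i, j) = colVals S j i := if_pos h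

lemma mem_cells_iff {μ : YoungDiagram} {i j : ℕ} :
    (i, j) ∈ μ.cells ↔ i < μ.colLen j := by
  rw [YoungDiagram.mem_cells, YoungDiagram.mem_iff_lt_colLen]

section Main
variable (μ : YoungDiagram) (m : ℕ) (S : ℕ → Finset ℕ)
  (hsub : ∀ j, S j ⊆ Finset.Icc 1 m) (hcard : ∀ j, (S j).card = μ.colLen j)

include hcard

lemma fillF_col0 {i i' : ℕ} (hlt : i < i') (h' : (i', 0) ∈ μ.cells) :
    fillF μ S (i', 0) < fillF μ S (i, 0) := by
  have hi' : i' < (S 0).card := by rw [hcard]; exact mem_cells_iff.mp h'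
  have hi : (i, 0) ∈ μ.cells := mem_cells_iff.mpr (by
    have := mem_cells_iff.mp h'; omega)
  rw [fillF_eq hi, fillF_eq h']
  show colVals S 0 i' < colVals S 0 i
  have hmem := entF_later_mem P0_mem hlt hi'
  rw [Finset.mem_sdiff, Finset.mem_singleton] at hmem
  exact pick0_lt hmem.1 hmem.2

lemma fillF_triple {i i' j : ℕ} (hlt : i < i') (hj : 0 < j)
    (h1 : (i, j) ∈ μ.cells) (h2 : (i', j) ∈ μ.cells) :
    InvTriple (fillF μ S (i, j - 1)) (fillF μ S (i, j)) (fillF μ S (i', j)) := by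
  obtain ⟨j', rfl⟩ : ∃ j', j = j' + 1 := ⟨j - 1, by omega⟩
  have hprev : (i, j') ∈ μ.cells := by
    rw [YoungDiagram.mem_cells] at h1 ⊢
    exact μ.up_left_mem (le_refl i) (by omega) h1
  have hi' : i' < (S (j'+1)).card := by rw [hcard]; exact mem_cells_iff.mp h2
  have hs : j' + 1 - 1 = j' := rfl
  rw [hs, fillF_eq hprev, fillF_eq h1, fillF_eq h2]
  show InvTriple (colVals S j' i) (entF (Pc (colVals S j')) (S (j'+1)) i)
    (entF (Pc (colVals S j')) (S (j'+1)) i')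
  have hmem := entF_later_mem (Pc_mem (colVals S j')) hlt hi'
  rw [Finset.mem_sdiff] at hmem
  exact pick_inv hmem.1

lemma fillF_colSet (j : ℕ) : colSetF μ (fillF μ S) j = S j := by
  unfold colSetF
  have himg : ∀ i ∈ Finset.range (μ.colLen j), fillF μ S (i, j) = colVals S j i := by
    intro i hi
    exact fillF_eq (mem_cells_iff.mpr (Finset.mem_range.mp hi))
  rw [Finset.image_congr (fun i hi => himg i hi), ← hcard j]
  cases j with
  | zero => exact entF_image P0_mem
  | succ j => exact entF_image (Pc_mem _)

include hsub in
lemma fillF_isCOF : IsCOF μ m (fillF μ S) := by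
  refine ⟨?_, ?_, ?_, ?_⟩
  · rintro ⟨i, j⟩ hc
    rw [fillF_eq hc]
    exact hsub j (colVals_mem S j i (by rw [hcard]; exact mem_cells_iff.mp hc))
  · intro c hc
    exact if_neg hc
  · intro i i' hlt h'
    exact fillF_col0 μ S hcard hlt h'
  · intro i i' j hlt hj h1 h2
    exact fillF_triple μ S hcard hlt hj h1 h2

lemma fillF_unique (F : ℕ × ℕ → ℕ) (hF : IsCOF μ m F)
    (hcol : ∀ j, colSetF μ F j = S j) : F = fillF μ S := by
  obtain ⟨hF1, hF2, hF3, hF4⟩ := hF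
  have main : ∀ j i, i < (S j).card → F (i, j) = colVals S j i := by
    intro j
    induction j with
    | zero =>
      intro i hi
      have himg : (Finset.range (S 0).card).image (fun i => F (i, 0)) = S 0 := by
        rw [hcard 0]; exact hcol 0
      have := entF_unique P0_mem (fun i => F (i, 0)) himg ?_ i
      · exact this.2 hi
      · intro i hi R hvR hall
        refine pick0_unique hvR ?_
        intro y hy hyne
        obtain ⟨i', hii', hi', rfl⟩ := hall y hy hyne
        exact hF3 i i' hii' (mem_cells_iff.mpr (by rw [← hcard 0]; exact hi'))
    | succ j ih =>
      intro i hi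
      have himg : (Finset.range (S (j+1)).card).image (fun i => F (i, j+1)) = S (j+1) := by
        rw [hcard (j+1)]; exact hcol (j+1)
      have := entF_unique (Pc_mem (colVals S j)) (fun i => F (i, j+1)) himg ?_ i
      · exact this.2 hi
      · intro i hi R hvR hall
        have hij1 : (i, j+1) ∈ μ.cells := mem_cells_iff.mpr (by
          rw [← hcard (j+1)]; exact hi)
        have hijcard : i < (S j).card := by
          rw [hcard j]
          exact lt_of_lt_of_le (by rw [← hcard (j+1)]; exact hi)
            (μ.colLen_anti j (j+1) (by omega))
        have hz : F (i, j) = colVals S j i := ih i hijcard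
        refine (pick_unique hvR ?_).trans rfl
        intro y hy hyne
        obtain ⟨i', hii', hi', rfl⟩ := hall y hy hyne
        have hi'j1 : (i', j+1) ∈ μ.cells := mem_cells_iff.mpr (by
          rw [← hcard (j+1)]; exact hi')
        have := hF4 i i' (j+1) hii' (by omega) hij1 hi'j1
        have hs : j + 1 - 1 = j := rfl
        rw [hs, hz] at this
        exact this
  funext c
  obtain ⟨i, j⟩ := c
  by_cases hc : (i, j) ∈ μ.cells
  · rw [fillF_eq hc, main j i (by rw [hcard]; exact mem_cells_iff.mp hc)]
  · rw [hF2 _ hc, fillF, if_neg hc]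

end Main

/-- Given column sets `S j ⊆ [m]` with `|S j| = μ'_j` (the length of column `j`
of `μ`), there is a unique coinversion-free filling of shape `μ` whose column
sets are exactly the `S j`.  (Taking `μ = λ'`, the column lengths are the parts
`λ_j`.) -/
theorem stmt3 (μ : YoungDiagram) (m : ℕ) (S : ℕ → Finset ℕ)
    (hsub : ∀ j, S j ⊆ Finset.Icc 1 m) (hcard : ∀ j, (S j).card = μ.colLen j) :
    ∃! F : ℕ × ℕ → ℕ, IsCOF μ m F ∧ ∀ j, colSetF μ F j = S j := by
  refine ⟨fillF μ S, ⟨fillF_isCOF μ m S hsub hcard, fillF_colSet μ S hcard⟩, ?_⟩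
  rintro F ⟨hF, hcol⟩
  exact fillF_unique μ m S hcard F hF hcol
end

section
/- Let W_{n,k} be the set of words of length n over the alphabet {1,...,k}, let the cyclic group C_n act on W_{n,k} by cyclic rotation, and let f_n(q) = Σ_{w ∈ W_{n,k}} q^{maj(w)}. Then (W_{n,k}, C_n, f_n(q)) exhibits the cyclic sieving phenomenon: for every d, the number of words fixed by d-fold rotation equals f_n(ξ^d) where ξ = e^{2πi/n}. -/
/-- The major index of a word `w = w₁ … w_n` (here `w : Fin n → Fin k`):
`maj(w) = Σ_{i : w_i > w_{i+1}} i` (positions `1`-indexed). -/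
def majW (n k : ℕ) (w : Fin n → Fin k) : ℕ :=
  ∑ i ∈ Finset.range n,
    if h : i + 1 < n then
      (if w ⟨i + 1, h⟩ < w ⟨i, by omega⟩ then i + 1 else 0)
    else 0

/-!
Let `g = gcd(n, d)` and `m = n / g`, so that `ζ = ξ ^ d` is a primitive `m`-th root of unity.
A word is fixed by rotation by `d` iff it has period `g`, so there are `k ^ g` fixed words.
Cutting a word of length `g * m` into `g` blocks of length `m`, the descents between blocks sit
at multiples of `m`, so `ζ ^ maj w` is the product of the `ζ ^ maj` of the blocks and
`f_n(ζ) = f_m(ζ) ^ g`. Finally `f_m(ζ) = k`: rotating a word `v` of length `m` by one letter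
preserves its number `cdes v` of cyclic descents and changes `maj v` by `cdes v` modulo `m`, so the
words with `cdes v = c` contribute `ζ ^ c` times their own sum, which therefore vanishes for
`0 < c < m`; and `cdes v = 0` only for the `k` constant words.
-/

open Finset

def majSummand (n k : ℕ) (w : Fin n → Fin k) (i : ℕ) : ℕ :=
  if h : i + 1 < n then (if w ⟨i + 1, h⟩ < w ⟨i, by omega⟩ then i + 1 else 0) else 0

theorem pow_majW_eq_prod {M : Type*} [CommMonoid M] (ζ : M) {n k : ℕ} (w : Fin n → Fin k) :
    ζ ^ majW n k w = ∏ i : Fin n, ζ ^ majSummand n k w i := by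
  rw [Fin.prod_univ_eq_prod_range (fun i => ζ ^ majSummand n k w i), prod_pow_eq_pow_sum]
  rfl

section CyclicDescents

variable {m : ℕ} [NeZero m] {α : Type*} [LinearOrder α]

def cyclicDescents (v : Fin m → α) : Finset (Fin m) := {i | v (i + 1) < v i}

def rotate : (Fin m → α) ≃ (Fin m → α) where
  toFun v i := v (i + 1)
  invFun v i := v (i - 1)
  left_inv v := by simp
  right_inv v := by simp

theorem cyclicDescents_rotate (v : Fin m → α) :
    cyclicDescents (rotate v) = (cyclicDescents v).map (Equiv.subRight 1).toEmbedding := by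
  ext i
  simp only [cyclicDescents, mem_map_equiv, mem_filter, mem_univ, true_and]
  simp [rotate]

theorem card_cyclicDescents_rotate (v : Fin m → α) :
    #(cyclicDescents (rotate v)) = #(cyclicDescents v) := by
  rw [cyclicDescents_rotate, card_map]

theorem card_cyclicDescents_lt [Finite α] (v : Fin m → α) : #(cyclicDescents v) < m := by
  obtain ⟨j, hj⟩ := Finite.exists_max v
  calc #(cyclicDescents v) < #(univ : Finset (Fin m)) :=
        card_lt_card (filter_ssubset.2 ⟨j - 1, mem_univ _, by simpa using hj (j - 1)⟩)
    _ = m := by simp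

open Fin.NatCast in
theorem cyclicDescents_eq_empty_iff (v : Fin m → α) :
    cyclicDescents v = ∅ ↔ ∃ a, v = Function.const (Fin m) a := by
  constructor
  · intro h
    have hstep : ∀ i, v i ≤ v (i + 1) := fun i => by
      simpa [cyclicDescents, filter_eq_empty_iff] using (filter_eq_empty_iff.1 h) (mem_univ i)
    have hmono : ∀ i (t : ℕ), v i ≤ v (i + t) := fun i t => by
      induction t with
      | zero => simp
      | succ t ih => exact ih.trans (by simpa [add_assoc] using hstep (i + t))
    have hle : ∀ i j, v i ≤ v j := fun i j => by simpa using hmono i (j - i).val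
    exact ⟨v 0, funext fun i => le_antisymm (hle i 0) (hle 0 i)⟩
  · rintro ⟨a, rfl⟩
    simp [cyclicDescents]

theorem card_cyclicDescents_eq_empty [Fintype α] :
    #{v : Fin m → α | cyclicDescents v = ∅} = Fintype.card α := by
  have : ({v : Fin m → α | cyclicDescents v = ∅} : Finset _) =
      univ.image (Function.const _) := by
    ext v
    simp [cyclicDescents_eq_empty_iff, eq_comm]
  rw [this, card_image_of_injective _ (Function.const_injective), card_univ]

end CyclicDescents

section MajorIndex

variable {M : Type*} [CommMonoid M] {ζ : M} {m k : ℕ}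

theorem pow_majSummand_of_pow_eq_one [NeZero m] (hζ : ζ ^ m = 1) (v : Fin m → Fin k)
    (i : Fin m) :
    ζ ^ majSummand m k v i = if v (i + 1) < v i then ζ ^ ((i : ℕ) + 1) else 1 := by
  by_cases h : (i : ℕ) + 1 < m
  · have hsucc : (⟨i + 1, h⟩ : Fin m) = i + 1 := Fin.ext (Fin.val_add_one_of_lt' h).symm
    simp only [majSummand, dif_pos h, hsucc, Fin.eta]
    split_ifs <;> simp
  · have hlast : (i : ℕ) + 1 = m := by omega
    rw [majSummand, dif_neg h, pow_zero, hlast, hζ, ite_self]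

theorem pow_majW_eq_prod_cyclicDescents [NeZero m] (hζ : ζ ^ m = 1) (v : Fin m → Fin k) :
    ζ ^ majW m k v = ∏ i ∈ cyclicDescents v, ζ ^ ((i : ℕ) + 1) := by
  rw [pow_majW_eq_prod, cyclicDescents, prod_filter]
  exact prod_congr rfl fun i _ => pow_majSummand_of_pow_eq_one hζ v i

theorem pow_val_sub_one_add_one [NeZero m] (hζ : ζ ^ m = 1) (j : Fin m) :
    ζ ^ ((j - 1 : Fin m) + 1 : ℕ) = ζ ^ (j : ℕ) := by
  rw [pow_eq_pow_mod _ hζ, ← Nat.add_mod_mod, ← Fin.val_one', ← Fin.val_add, sub_add_cancel]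

theorem pow_majW_eq_pow_card_mul_pow_majW_rotate [NeZero m] (hζ : ζ ^ m = 1)
    (v : Fin m → Fin k) :
    ζ ^ majW m k v = ζ ^ #(cyclicDescents v) * ζ ^ majW m k (rotate v) := by
  rw [pow_majW_eq_prod_cyclicDescents hζ, pow_majW_eq_prod_cyclicDescents hζ,
    cyclicDescents_rotate, prod_map]
  simp only [Equiv.coe_toEmbedding, Equiv.subRight_apply, pow_val_sub_one_add_one hζ, pow_succ,
    prod_mul_distrib, prod_const, mul_comm]

theorem pow_majSummand_finProdFinEquiv (hζ : ζ ^ m = 1) {g : ℕ} (w : Fin (g * m) → Fin k)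
    (j : Fin g) (r : Fin m) :
    ζ ^ majSummand (g * m) k w (finProdFinEquiv (j, r)) =
      ζ ^ majSummand m k (fun r => w (finProdFinEquiv (j, r))) r := by
  have hval : (finProdFinEquiv (j, r) : ℕ) = r + m * j := rfl
  have hζmul : ∀ a, ζ ^ (m * a) = 1 := fun a => by rw [pow_mul, hζ, one_pow]
  by_cases hr : (r : ℕ) + 1 < m
  · have hi : (finProdFinEquiv (j, r) : ℕ) + 1 < g * m := by
      have := (finProdFinEquiv (j, (⟨r + 1, hr⟩ : Fin m))).isLt
      simp only [finProdFinEquiv_apply_val] at this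
      omega
    have hsucc : (⟨finProdFinEquiv (j, r) + 1, hi⟩ : Fin (g * m)) =
        finProdFinEquiv (j, ⟨r + 1, hr⟩) :=
      Fin.ext (by simp only [finProdFinEquiv_apply_val]; omega)
    rw [majSummand, majSummand, dif_pos hi, dif_pos hr, hsucc, Fin.eta, Fin.eta]
    split_ifs
    · rw [hval, show (r : ℕ) + m * j + 1 = r + 1 + m * j by ring, pow_add, hζmul, mul_one]
    · rfl
  · have hlast : (r : ℕ) + 1 = m := by omega
    rw [majSummand, majSummand, dif_neg hr, pow_zero]
    split_ifs
    · rw [hval, show (r : ℕ) + m * j + 1 = m * (j + 1) by rw [mul_add]; omega, hζmul]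
    all_goals exact pow_zero ζ

theorem pow_majW_eq_prod_blocks (hζ : ζ ^ m = 1) {g : ℕ} (w : Fin (g * m) → Fin k) :
    ζ ^ majW (g * m) k w = ∏ j, ζ ^ majW m k (fun r => w (finProdFinEquiv (j, r))) := by
  simp only [pow_majW_eq_prod ζ, ← finProdFinEquiv.prod_comp, Fintype.prod_prod_type,
    pow_majSummand_finProdFinEquiv hζ]

end MajorIndex

theorem sum_pow_majW_of_eq_mul {R : Type*} [CommSemiring R] {ζ : R} {n g m : ℕ} (k : ℕ)
    (hn : n = g * m) (hζ : ζ ^ m = 1) :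
    ∑ w : Fin n → Fin k, ζ ^ majW n k w = (∑ v : Fin m → Fin k, ζ ^ majW m k v) ^ g := by
  subst hn
  rw [Fintype.sum_pow]
  exact Fintype.sum_equiv
    ((finProdFinEquiv.arrowCongr (Equiv.refl _)).symm.trans (Equiv.curry _ _ _))
    _ _ fun w => pow_majW_eq_prod_blocks hζ w

section PrimitiveRoot

variable {R : Type*} [CommRing R] [IsDomain R] {ζ : R} {m k : ℕ} [NeZero m]

theorem sum_pow_majW_filter_card_cyclicDescents_eq_zero {c : ℕ} (hζ : ζ ^ m = 1)
    (hc : ζ ^ c ≠ 1) :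
    ∑ v : Fin m → Fin k with #(cyclicDescents v) = c, ζ ^ majW m k v = 0 := by
  set S := ∑ v : Fin m → Fin k with #(cyclicDescents v) = c, ζ ^ majW m k v
  have hrot : S = ζ ^ c * S := by
    rw [mul_sum]
    refine sum_equiv rotate (fun v => ?_) fun v hv => ?_
    · simp only [mem_filter, mem_univ, true_and, card_cyclicDescents_rotate]
    · rw [pow_majW_eq_pow_card_mul_pow_majW_rotate hζ v, (mem_filter.1 hv).2]
  by_contra hS
  exact hc (mul_right_cancel₀ hS (by rwa [one_mul, eq_comm]))

theorem sum_pow_majW_of_isPrimitiveRoot (hζ : IsPrimitiveRoot ζ m) :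
    ∑ v : Fin m → Fin k, ζ ^ majW m k v = k := by
  rw [← sum_fiberwise_of_maps_to (g := fun v => #(cyclicDescents v)) (t := range m)
    fun v _ => mem_range.2 (card_cyclicDescents_lt v)]
  rw [sum_eq_single_of_mem 0 (mem_range.2 (NeZero.pos m)) fun c hc hc0 =>
    sum_pow_majW_filter_card_cyclicDescents_eq_zero hζ.pow_eq_one
      (hζ.pow_ne_one_of_pos_of_lt hc0 (mem_range.1 hc))]
  simp only [card_eq_zero]
  have hconst : ∀ v ∈ ({v | cyclicDescents v = ∅} : Finset (Fin m → Fin k)),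
      ζ ^ majW m k v = 1 := fun v hv => by
    rw [pow_majW_eq_prod_cyclicDescents hζ.pow_eq_one, (mem_filter.1 hv).2, prod_empty]
  rw [sum_congr rfl hconst, sum_const, nsmul_one, card_cyclicDescents_eq_empty, Fintype.card_fin]

end PrimitiveRoot

section Periods

open Fin.CommRing

variable {n : ℕ} [NeZero n] {α : Type*}

def periods (w : Fin n → α) : AddSubgroup (Fin n) where
  carrier := {c | ∀ i, w (i + c) = w i}
  add_mem' {a b} ha hb i := by rw [← add_assoc, hb, ha]
  zero_mem' i := by rw [add_zero]
  neg_mem' {c} hc i := by rw [← hc (i + -c), neg_add_cancel_right]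

theorem mem_periods {w : Fin n → α} {c : Fin n} : c ∈ periods w ↔ ∀ i, w (i + c) = w i :=
  Iff.rfl

theorem natCast_mem_periods_iff_gcd (w : Fin n → α) (d : ℕ) :
    (d : Fin n) ∈ periods w ↔ (n.gcd d : Fin n) ∈ periods w := by
  constructor
  · intro hd
    have : (n.gcd d : Fin n) = Nat.gcdB n d • (d : Fin n) := by
      rw [← Int.cast_natCast, Nat.gcd_eq_gcd_ab]
      simp [zsmul_eq_mul, mul_comm]
    exact this ▸ AddSubgroup.zsmul_mem _ hd _
  · intro hg
    obtain ⟨t, ht⟩ := Nat.gcd_dvd_right n d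
    have : (d : Fin n) = t • (n.gcd d : Fin n) := by
      rw [nsmul_eq_mul, ← Nat.cast_mul, mul_comm, ← ht]
    exact this ▸ AddSubgroup.nsmul_mem _ hg _

theorem apply_eq_apply_mod_of_mem_periods {w : Fin n → α} {g : ℕ}
    (hw : (g : Fin n) ∈ periods w) (i : Fin n) : w i = w ((i % g : ℕ) : Fin n) := by
  conv_lhs => rw [← Fin.cast_val_eq_self i, ← Nat.mod_add_div' i g, Nat.cast_add, Nat.cast_mul,
    ← nsmul_eq_mul]
  exact mem_periods.1 (AddSubgroup.nsmul_mem _ hw _) _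

def periodicEquiv {g : ℕ} (hg : g ∣ n) :
    {w : Fin n → α // (g : Fin n) ∈ periods w} ≃ (Fin g → α) where
  toFun w j := w.1 (j : ℕ)
  invFun v := ⟨fun i => v ⟨i % g, Nat.mod_lt _ (Nat.pos_of_dvd_of_pos hg (NeZero.pos n))⟩,
    fun i => congrArg v <| Fin.ext <| by
      dsimp only
      rw [Fin.val_add, Fin.val_natCast, Nat.mod_mod_of_dvd _ hg, Nat.add_mod,
        Nat.mod_mod_of_dvd _ hg, Nat.mod_self, add_zero, Nat.mod_mod]⟩
  left_inv w := Subtype.ext <| funext fun i => (apply_eq_apply_mod_of_mem_periods w.2 i).symm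
  right_inv v := by
    ext j
    have hj : (j : ℕ) < n := j.isLt.trans_le (Nat.le_of_dvd (NeZero.pos n) hg)
    simp [Fin.val_cast_of_lt hj, Nat.mod_eq_of_lt j.isLt]

theorem card_natCast_mem_periods (d : ℕ) :
    Nat.card {w : Fin n → α // (d : Fin n) ∈ periods w} = Nat.card α ^ n.gcd d := by
  rw [Nat.card_congr (Equiv.subtypeEquivRight fun w => natCast_mem_periods_iff_gcd w d),
    Nat.card_congr (periodicEquiv (Nat.gcd_dvd_left n d)), Nat.card_fun, Nat.card_fin]

end Periods

open Fin.CommRing in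
theorem card_fixed_rotation {α : Type*} {n : ℕ} (hn : 0 < n) (d : ℕ) :
    Nat.card {w : Fin n → α // ∀ i : Fin n, w ⟨(i + d) % n, Nat.mod_lt _ hn⟩ = w i} =
      Nat.card α ^ n.gcd d := by
  have : NeZero n := ⟨hn.ne'⟩
  have hrot (i : Fin n) : (⟨(i + d) % n, Nat.mod_lt _ hn⟩ : Fin n) = i + (d : Fin n) :=
    Fin.ext (by rw [Fin.val_add, Fin.val_natCast, Nat.add_mod_mod])
  rw [← card_natCast_mem_periods]
  exact Nat.card_congr (Equiv.subtypeEquivRight fun w => by simp only [mem_periods, hrot])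

theorem IsPrimitiveRoot.pow_div_gcd {M : Type*} [CommMonoid M] {ζ : M} {n : ℕ}
    (h : IsPrimitiveRoot ζ n) (hn : n ≠ 0) (d : ℕ) :
    IsPrimitiveRoot (ζ ^ d) (n / n.gcd d) := by
  have := IsPrimitiveRoot.orderOf (ζ ^ d)
  rwa [(h.isOfFinOrder hn).orderOf_pow, ← h.eq_orderOf] at this

/-- Cyclic sieving on words: the number of words of length `n` over `[k]`
fixed by `d`-fold cyclic rotation equals `f_n(ξ^d)`, where
`f_n(q) = Σ_w q^(maj w)` and `ξ = e^(2πi/n)`. -/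
theorem stmt5 (n k d : ℕ) (hn : 0 < n) :
    (Fintype.card {w : Fin n → Fin k //
        ∀ i : Fin n, w ⟨((i : ℕ) + d) % n, Nat.mod_lt _ hn⟩ = w i} : ℂ)
      = ∑ w : Fin n → Fin k,
          (Complex.exp (2 * Real.pi * Complex.I / n)) ^ (d * majW n k w) := by
  have hζ := (Complex.isPrimitiveRoot_exp n hn.ne').pow_div_gcd hn.ne' d
  have : NeZero (n / n.gcd d) :=
    ⟨(Nat.div_pos (Nat.gcd_le_left d hn) (Nat.gcd_pos_of_pos_left d hn)).ne'⟩
  simp_rw [pow_mul]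
  rw [Fintype.card_eq_nat_card, card_fixed_rotation hn, Nat.card_eq_fintype_card, Fintype.card_fin,
    sum_pow_majW_of_eq_mul k (Nat.mul_div_cancel' (Nat.gcd_dvd_left n d)).symm hζ.pow_eq_one,
    sum_pow_majW_of_isPrimitiveRoot hζ]
  exact Nat.cast_pow k _
end

section
/- Fix a positive integer k. The family of CSP triples (W_{n,k}, C_n, f_n) for words of length n under rotation with major-index generating polynomial f_n is Lyndon-like: for all positive integers d, n with d | n, f_{n/d}(1) = f_n(e^{2πi/d}). Equivalently, the number of words of length n over [k] fixed by rotation by n/d steps equals the number of words of length n/d over [k]. -/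
def majN (m : ℕ) (v : ℕ → ℕ) : ℕ :=
  ∑ i ∈ Finset.range m, if i + 1 < m ∧ v (i + 1) < v i then i + 1 else 0

lemma majN_congr (m : ℕ) (v₁ v₂ : ℕ → ℕ) (h : ∀ i < m, v₁ i = v₂ i) :
    majN m v₁ = majN m v₂ := by
  unfold majN
  refine Finset.sum_congr rfl fun i hi => ?_
  rw [Finset.mem_range] at hi
  by_cases h1 : i + 1 < m
  · rw [h i hi, h (i+1) h1]
  · rw [if_neg (by tauto), if_neg (by tauto)]

lemma majW_eq_majN (n k : ℕ) (w : Fin n → Fin k) :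
    majW n k w = majN n (fun i => if h : i < n then (w ⟨i, h⟩).val else 0) := by
  unfold majW majN
  refine Finset.sum_congr rfl fun i hi => ?_
  rw [Finset.mem_range] at hi
  by_cases h1 : i + 1 < n
  · simp only [dif_pos h1, dif_pos hi]
    by_cases h2 : w ⟨i + 1, h1⟩ < w ⟨i, by omega⟩
    · rw [if_pos h2, if_pos ⟨h1, h2⟩]
    · rw [if_neg h2, if_neg (by
        rintro ⟨-, hlt⟩
        exact h2 hlt)]
  · rw [dif_neg h1, if_neg (by tauto)]

lemma majN_add_block (d m : ℕ) (hd : 0 < d) (hm : d ∣ m) (v : ℕ → ℕ) :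
    ((majN (m + d) v : ZMod d)) = (majN m v : ZMod d) + (majN d (fun r => v (m + r)) : ZMod d) := by
  unfold majN
  push_cast
  rw [Finset.sum_range_add]
  congr 1
  · refine Finset.sum_congr rfl fun i hi => ?_
    rw [Finset.mem_range] at hi
    by_cases h1 : i + 1 < m
    · have h2 : i + 1 < m + d := by omega
      by_cases h3 : v (i+1) < v i
      · rw [if_pos ⟨h2, h3⟩, if_pos ⟨h1, h3⟩]
      · rw [if_neg (fun h => h3 h.2), if_neg (fun h => h3 h.2)]
    · have h4 : i + 1 = m := by omega
      rw [if_neg (show ¬(i + 1 < m ∧ v (i+1) < v i) from fun h => h1 h.1)]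
      by_cases h3 : v (i+1) < v i
      · rw [if_pos (show i + 1 < m + d ∧ v (i+1) < v i from ⟨by omega, h3⟩)]
        rw [show ((i:ZMod d) + 1 = ((i+1 : ℕ) : ZMod d)) by push_cast; ring, h4]
        exact (ZMod.natCast_eq_zero_iff m d).2 hm
      · rw [if_neg (show ¬(i + 1 < m + d ∧ v (i+1) < v i) from fun h => h3 h.2)]
  · refine Finset.sum_congr rfl fun r hr => ?_
    rw [Finset.mem_range] at hr
    have hmz : (m : ZMod d) = 0 := (ZMod.natCast_eq_zero_iff m d).2 hm
    by_cases h1 : r + 1 < d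
    · have h2 : m + r + 1 < m + d := by omega
      by_cases h3 : v (m + r + 1) < v (m + r)
      · rw [if_pos ⟨h2, h3⟩, if_pos ⟨h1, by simpa [Nat.add_assoc] using h3⟩]
        push_cast [hmz]; ring
      · rw [if_neg (by rintro ⟨-, h⟩; exact h3 (by simpa [Nat.add_assoc] using h)),
          if_neg (by rintro ⟨-, h⟩; exact h3 (by simpa [Nat.add_assoc] using h))]
    · rw [if_neg (by omega), if_neg (fun h => h1 h.1)]

lemma majN_blocks (d t : ℕ) (hd : 0 < d) (v : ℕ → ℕ) :
    ((majN (d * t) v : ZMod d)) = ∑ j ∈ Finset.range t, (majN d (fun r => v (d * j + r)) : ZMod d) := by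
  induction t with
  | zero => simp [majN]
  | succ t ih =>
      rw [Finset.sum_range_succ, ← ih, show d * (t+1) = d * t + d by ring,
        majN_add_block d (d*t) hd ⟨t, rfl⟩ v]

variable {d k : ℕ} [NeZero d]

open Fin.NatCast Fin.CommRing

def cycW (d k : ℕ) [NeZero d] (w : Fin d → Fin k) : ℕ :=
  ∑ i : Fin d, if w (i + 1) < w i then 1 else 0

def majZ (d k : ℕ) [NeZero d] (w : Fin d → Fin k) : ZMod d :=
  ∑ i : Fin d, if w (i + 1) < w i then ((i : ℕ) + 1 : ZMod d) else 0

lemma val_cast_zmod_add (a b : Fin d) :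
    (((a + b : Fin d) : ℕ) : ZMod d) = ((a : ℕ) : ZMod d) + ((b : ℕ) : ZMod d) := by
  rw [Fin.val_add, ZMod.natCast_mod]; push_cast; ring

lemma add_one_eq_mk {i : ℕ} (h : i + 1 < d) :
    (⟨i, by omega⟩ : Fin d) + 1 = ⟨i + 1, h⟩ := by
  apply Fin.ext
  rw [Fin.val_add]
  have h1 : ((1 : Fin d) : ℕ) = 1 := by
    rw [Fin.val_one']; exact Nat.mod_eq_of_lt (by omega)
  rw [h1]
  exact Nat.mod_eq_of_lt h

lemma add_one_eq_zero {i : Fin d} (h : (i : ℕ) + 1 = d) :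
    i + 1 = (⟨0, Nat.pos_of_ne_zero (NeZero.ne d)⟩ : Fin d) := by
  apply Fin.ext
  rw [Fin.val_add, Fin.val_one']
  rcases Nat.lt_or_ge 1 d with h2 | h2
  · rw [Nat.mod_eq_of_lt h2]
    simp [h]
  · have hd1 : d = 1 := by have := Nat.pos_of_ne_zero (NeZero.ne d); omega
    subst hd1
    simp

lemma majW_cast_eq_majZ (w : Fin d → Fin k) :
    ((majW d k w : ℕ) : ZMod d) = majZ d k w := by
  unfold majW majZ
  rw [Nat.cast_sum]
  rw [← Fin.sum_univ_eq_sum_range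
    (fun i => (((if h : i + 1 < d then
      (if w ⟨i + 1, h⟩ < w ⟨i, by omega⟩ then i + 1 else 0) else 0) : ℕ) : ZMod d))]
  refine Finset.sum_congr rfl fun i _ => ?_
  by_cases h : (i : ℕ) + 1 < d
  · rw [dif_pos h]
    have h2 : i + 1 = (⟨(i:ℕ) + 1, h⟩ : Fin d) := by
      conv_lhs => rw [← Fin.eta i i.isLt]
      exact add_one_eq_mk h
    rw [h2]
    simp only [Fin.eta]
    split_ifs with h5
    · push_cast; ring
    · simp
  · rw [dif_neg h]
    have h3 : (i : ℕ) + 1 = d := by omega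
    have h6 : ((i:ℕ) : ZMod d) + 1 = 0 := by
      rw [show ((i:ℕ) : ZMod d) + 1 = (((i:ℕ)+1 : ℕ) : ZMod d) by push_cast; ring, h3,
        ZMod.natCast_self]
    split_ifs with h5
    · rw [h6, Nat.cast_zero]
    · simp

lemma cast_val_sub_one_add_one (j : Fin d) :
    (((j - 1 : Fin d) : ℕ) : ZMod d) + 1 = ((j : ℕ) : ZMod d) := by
  have h := val_cast_zmod_add (j - 1) 1
  rw [sub_add_cancel, Fin.val_one', ZMod.natCast_mod, Nat.cast_one] at h
  exact h.symm

lemma cycW_rot (w : Fin d → Fin k) (c : Fin d) :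
    cycW d k (fun i => w (i + c)) = cycW d k w := by
  unfold cycW
  simp only []
  rw [← Equiv.sum_comp (Equiv.addRight c)
    (fun j => if w (j + 1) < w j then 1 else 0)]
  refine Finset.sum_congr rfl fun i _ => ?_
  simp only [Equiv.coe_addRight, show i + 1 + c = i + c + 1 from by ring]; rfl

lemma majZ_rot (w : Fin d → Fin k) :
    majZ d k (fun i => w (i + 1)) + ((cycW d k w : ℕ) : ZMod d) = majZ d k w := by
  unfold majZ cycW
  push_cast
  have h1 : ∑ i : Fin d, (if w (i + 1 + 1) < w (i + 1) then ((i : ℕ) + 1 : ZMod d) else 0)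
      = ∑ j : Fin d, (if w (j + 1) < w j then ((((j - 1 : Fin d) : ℕ) : ZMod d) + 1) else 0) := by
    rw [← Equiv.sum_comp (Equiv.addRight (1 : Fin d))
      (fun j => if w (j + 1) < w j then ((((j - 1 : Fin d) : ℕ) : ZMod d) + 1) else 0)]
    refine Finset.sum_congr rfl fun i _ => ?_
    simp only [Equiv.coe_addRight, add_sub_cancel_right]
  rw [h1, ← Finset.sum_add_distrib]
  refine Finset.sum_congr rfl fun j _ => ?_
  split_ifs with h
  · rw [cast_val_sub_one_add_one]
  · ring

lemma maj_rot_iter (w : Fin d → Fin k) (j : ℕ) :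
    ((majW d k (fun i => w (i + (j : Fin d))) + j * cycW d k w : ℕ) : ZMod d)
      = ((majW d k w : ℕ) : ZMod d) := by
  induction j with
  | zero => simp
  | succ j ih =>
      set v : Fin d → Fin k := fun i => w (i + (j : Fin d)) with hv
      have hfun : (fun i => w (i + ((j + 1 : ℕ) : Fin d))) = fun i => v (i + 1) := by
        funext i
        rw [hv]
        simp only []
        congr 1
        push_cast
        ring
      have hstep : ((majW d k (fun i => v (i + 1)) : ℕ) : ZMod d)
          + ((cycW d k v : ℕ) : ZMod d) = ((majW d k v : ℕ) : ZMod d) := by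
        rw [majW_cast_eq_majZ, majW_cast_eq_majZ]
        exact majZ_rot v
      have hcyc : cycW d k v = cycW d k w := cycW_rot w _
      rw [hfun]
      push_cast at ih ⊢
      rw [hcyc] at hstep
      calc ((majW d k (fun i => v (i + 1)) : ℕ) : ZMod d) + ((j:ZMod d) + 1) * (cycW d k w : ℕ)
          = (((majW d k (fun i => v (i + 1)) : ℕ) : ZMod d) + (cycW d k w : ℕ))
            + (j : ZMod d) * (cycW d k w : ℕ) := by ring
        _ = ((majW d k v : ℕ) : ZMod d) + (j : ZMod d) * (cycW d k w : ℕ) := by rw [hstep]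
        _ = _ := ih

lemma cycW_all_desc (w : Fin d → Fin k) (h : cycW d k w = d) :
    ∀ i : Fin d, w (i + 1) < w i := by
  have h1 : cycW d k w = (Finset.univ.filter fun i : Fin d => w (i + 1) < w i).card := by
    unfold cycW
    rw [Finset.card_filter]
  have h2 : (Finset.univ.filter fun i : Fin d => w (i + 1) < w i).card
      = (Finset.univ : Finset (Fin d)).card := by
    rw [← h1, h, Finset.card_univ, Fintype.card_fin]
  have h3 := Finset.card_filter_eq_iff.mp h2
  exact fun i => h3 i (Finset.mem_univ i)

lemma cycW_ne (w : Fin d → Fin k) : cycW d k w ≠ d := by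
  intro h
  have hall := cycW_all_desc w h
  have key : ∀ j : ℕ, ((w ((j : ℕ) : Fin d)) : ℕ) + j ≤ ((w ((0 : ℕ) : Fin d)) : ℕ) := by
    intro j
    induction j with
    | zero => simp
    | succ j ih =>
        have hlt := hall ((j : ℕ) : Fin d)
        have hc : (((j + 1 : ℕ)) : Fin d) = ((j : ℕ) : Fin d) + 1 := by push_cast; ring
        rw [hc]
        have := Fin.lt_iff_val_lt_val.mp hlt
        omega
  have h2 := key (((w ((0 : ℕ) : Fin d)) : ℕ) + 1)
  omega

lemma cycW_zero_const (w : Fin d → Fin k) (h : cycW d k w = 0) :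
    ∀ i : Fin d, w i = w 0 := by
  have h0 : ∀ i : Fin d, ¬ (w (i + 1) < w i) := by
    intro i hi
    have : (if w (i + 1) < w i then 1 else 0) = 0 := by
      refine Finset.sum_eq_zero_iff.mp h i (Finset.mem_univ i)
    rw [if_pos hi] at this
    exact one_ne_zero this
  have mono : ∀ (j : ℕ) (i : Fin d), w i ≤ w (i + (j : ℕ)) := by
    intro j
    induction j with
    | zero => intro i; simp
    | succ j ih =>
        intro i
        have h1 : w (i + (j : ℕ)) ≤ w (i + (j : ℕ) + 1) := le_of_not_gt (h0 _)
        have h2 : (i + ((j + 1 : ℕ) : Fin d)) = i + (j : ℕ) + 1 := by push_cast; ring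
        rw [h2]
        exact le_trans (ih i) h1
  intro i
  by_cases hz : (i : ℕ) = 0
  · congr 1
    exact Fin.ext hz
  · refine le_antisymm ?_ ?_
    · have h1 := mono (d - (i : ℕ)) i
      have h2 : i + ((d - (i : ℕ) : ℕ) : Fin d) = 0 := by
        apply Fin.ext
        rw [Fin.val_add, Fin.val_natCast]
        have hi := i.isLt
        have h3 : (d - (i : ℕ)) % d = d - (i : ℕ) := Nat.mod_eq_of_lt (by omega)
        rw [h3]
        have h4 : (i : ℕ) + (d - (i : ℕ)) = d := by omega
        rw [h4, Nat.mod_self]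
        rfl
      rwa [h2] at h1
    · have h1 := mono (i : ℕ) 0
      rwa [zero_add, Fin.cast_val_eq_self] at h1

lemma majW_eq_zero_of_cyc_zero (w : Fin d → Fin k) (h : cycW d k w = 0) :
    majW d k w = 0 := by
  have hc := cycW_zero_const w h
  unfold majW
  refine Finset.sum_eq_zero fun i hi => ?_
  split_ifs with h1 h2
  · rw [hc ⟨i + 1, h1⟩, hc ⟨i, by omega⟩] at h2
    exact absurd h2 (lt_irrefl _)
  · rfl
  · rfl

lemma card_const_words : (Finset.univ.filter fun w : Fin d → Fin k => cycW d k w = 0).card = k := by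
  have key : (Finset.univ.filter fun w : Fin d → Fin k => cycW d k w = 0).card
      = (Finset.univ : Finset (Fin k)).card := by
    refine Finset.card_nbij' (fun w => w 0) (fun c => fun _ => c) ?_ ?_ ?_ ?_
    · intro a _; exact Finset.mem_univ _
    · intro c _
      simp only [Finset.mem_coe, Finset.mem_filter, Finset.mem_univ, true_and]
      unfold cycW
      exact Finset.sum_eq_zero fun i _ => if_neg (lt_irrefl c)
    · intro w hw
      rw [Finset.mem_coe, Finset.mem_filter] at hw
      funext i
      exact (cycW_zero_const w hw.2 i).symm
    · intro c _; rfl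
  rw [key, Finset.card_univ, Fintype.card_fin]

lemma cycW_le (w : Fin d → Fin k) : cycW d k w ≤ d := by
  unfold cycW
  calc ∑ i : Fin d, (if w (i + 1) < w i then 1 else 0)
      ≤ ∑ _i : Fin d, 1 := Finset.sum_le_sum fun i _ => by split_ifs <;> omega
    _ = d := by simp

lemma stage2 (ζ : ℂ) (hζ : IsPrimitiveRoot ζ d) :
    ∑ w : Fin d → Fin k, ζ ^ (majW d k w) = (k : ℂ) := by
  have hd : 0 < d := Nat.pos_of_ne_zero (NeZero.ne d)
  have hζd : ζ ^ d = 1 := hζ.pow_eq_one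
  have hζ0 : ζ ≠ 0 := by
    intro h
    rw [h, zero_pow hd.ne'] at hζd
    exact zero_ne_one hζd
  have hpow1 : ∀ a : ℕ, ζ ^ a = ζ ^ (a % d) := by
    intro a
    conv_lhs => rw [← Nat.div_add_mod a d]
    rw [pow_add, pow_mul, hζd, one_pow, one_mul]
  have hpow : ∀ a b : ℕ, ((a : ZMod d) = (b : ZMod d)) → ζ ^ a = ζ ^ b := by
    intro a b hab
    rw [ZMod.natCast_eq_natCast_iff'] at hab
    rw [hpow1 a, hpow1 b, hab]
  have hrot : ∀ c : ℕ,
      ∑ w : Fin d → Fin k, ζ ^ (majW d k (fun i => w (i + (c : Fin d))))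
        = ∑ w : Fin d → Fin k, ζ ^ (majW d k w) := by
    intro c
    have hbij : Function.Bijective
        (fun w : Fin d → Fin k => (fun i => w (i + (c : Fin d)))) := by
      constructor
      · intro a b hab
        funext i
        have h1 := congrFun hab (i - (c : Fin d))
        simpa [sub_add_cancel] using h1
      · intro b
        exact ⟨fun i => b (i - (c : Fin d)), by funext i; simp [add_sub_cancel_right]⟩
    exact Fintype.sum_bijective _ hbij _ _ (fun w => rfl)
  have key : (d : ℂ) * (∑ w : Fin d → Fin k, ζ ^ (majW d k w)) = (d : ℂ) * (k : ℂ) := by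
    calc (d : ℂ) * (∑ w : Fin d → Fin k, ζ ^ (majW d k w))
        = ∑ _j ∈ Finset.range d, ∑ w : Fin d → Fin k, ζ ^ (majW d k w) := by
          rw [Finset.sum_const, Finset.card_range, nsmul_eq_mul]
      _ = ∑ j ∈ Finset.range d, ∑ w : Fin d → Fin k,
            ζ ^ (majW d k (fun i => w (i + (j : Fin d)))) := by
          exact Finset.sum_congr rfl fun j _ => (hrot j).symm
      _ = ∑ w : Fin d → Fin k, ∑ j ∈ Finset.range d,
            ζ ^ (majW d k (fun i => w (i + (j : Fin d)))) := Finset.sum_comm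
      _ = ∑ w : Fin d → Fin k, (if cycW d k w = 0 then (d : ℂ) else 0) := by
          refine Finset.sum_congr rfl fun w _ => ?_
          have hterm : ∀ j : ℕ,
              ζ ^ (majW d k (fun i => w (i + (j : Fin d)))) * (ζ ^ cycW d k w) ^ j
                = ζ ^ (majW d k w) := by
            intro j
            have h1 := hpow _ _ (maj_rot_iter w j)
            rw [pow_add, pow_mul'] at h1
            exact h1
          by_cases hc0 : cycW d k w = 0
          · rw [if_pos hc0]
            have hmw : majW d k w = 0 := majW_eq_zero_of_cyc_zero w hc0
            have : ∀ j ∈ Finset.range d,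
                ζ ^ (majW d k (fun i => w (i + (j : Fin d)))) = 1 := by
              intro j _
              have h2 := hterm j
              rw [hc0, pow_zero, one_pow, mul_one, hmw, pow_zero] at h2
              exact h2
            rw [Finset.sum_congr rfl this, Finset.sum_const, Finset.card_range,
              nsmul_eq_mul, mul_one]
          · rw [if_neg hc0]
            set c := cycW d k w with hc
            have hcpos : 0 < c := Nat.pos_of_ne_zero hc0
            have hclt : c < d := lt_of_le_of_ne (cycW_le w) (cycW_ne w)
            have hζc : ζ ^ c ≠ 1 := hζ.pow_ne_one_of_pos_of_lt hcpos.ne' hclt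
            have hy1 : ((ζ ^ c)⁻¹ : ℂ) ≠ 1 := by
              intro h
              rw [inv_eq_one] at h
              exact hζc h
            have hyd : ((ζ ^ c)⁻¹ : ℂ) ^ d = 1 := by
              rw [inv_pow, ← pow_mul, mul_comm, pow_mul, hζd, one_pow, inv_one]
            have hform : ∀ j : ℕ,
                ζ ^ (majW d k (fun i => w (i + (j : Fin d))))
                  = ζ ^ (majW d k w) * ((ζ ^ c)⁻¹) ^ j := by
              intro j
              have h2 := hterm j
              have h3 : ((ζ ^ c) ^ j : ℂ) ≠ 0 := pow_ne_zero _ (pow_ne_zero _ hζ0)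
              rw [inv_pow, eq_mul_inv_iff_mul_eq₀ h3]
              exact h2
            rw [Finset.sum_congr rfl fun j _ => hform j, ← Finset.mul_sum,
              geom_sum_eq hy1, hyd]
            simp
      _ = (d : ℂ) * (k : ℂ) := by
          rw [← Finset.sum_filter]
          rw [Finset.sum_const]
          rw [card_const_words, nsmul_eq_mul, mul_comm]
  exact mul_left_cancel₀ (by exact_mod_cast hd.ne' : (d : ℂ) ≠ 0) key

lemma zeta_pow_congr {d : ℕ} {ζ : ℂ} (hζd : ζ ^ d = 1) {a b : ℕ}
    (h : (a : ZMod d) = (b : ZMod d)) : ζ ^ a = ζ ^ b := by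
  have hp : ∀ a : ℕ, ζ ^ a = ζ ^ (a % d) := by
    intro a
    conv_lhs => rw [← Nat.div_add_mod a d]
    rw [pow_add, pow_mul, hζd, one_pow, one_mul]
  rw [ZMod.natCast_eq_natCast_iff'] at h
  rw [hp a, hp b, h]

/-- The block equivalence: words of length `d*t` are `t`-tuples of words of length `d`. -/
def blockEquiv (d t k : ℕ) (hd : 0 < d) : (Fin t → Fin d → Fin k) ≃ (Fin (d * t) → Fin k) where
  toFun u := fun i => u ⟨(i : ℕ) / d, (Nat.div_lt_iff_lt_mul hd).mpr
      (Nat.lt_of_lt_of_eq i.isLt (Nat.mul_comm d t))⟩ ⟨(i : ℕ) % d, Nat.mod_lt _ hd⟩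
  invFun w := fun j r => w ⟨d * (j : ℕ) + (r : ℕ), by
      calc d * (j : ℕ) + (r : ℕ) < d * (j : ℕ) + d := by omega
        _ = d * ((j : ℕ) + 1) := by ring
        _ ≤ d * t := Nat.mul_le_mul_left d j.isLt⟩
  left_inv u := by
    funext j r
    have hj : (d * (j : ℕ) + (r : ℕ)) / d = (j : ℕ) := by
      rw [Nat.mul_add_div hd, Nat.div_eq_of_lt r.isLt, Nat.add_zero]
    have hr2 : (d * (j : ℕ) + (r : ℕ)) % d = (r : ℕ) := by
      rw [Nat.mul_add_mod, Nat.mod_eq_of_lt r.isLt]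
    simp only [hj, hr2, Fin.eta]
  right_inv w := by
    funext i
    simp only []
    exact congrArg w (Fin.ext (Nat.div_add_mod (i : ℕ) d))

lemma stage1 {d k : ℕ} [NeZero d] (t : ℕ) (ζ : ℂ) (hζd : ζ ^ d = 1) :
    ∑ w : Fin (d * t) → Fin k, ζ ^ (majW (d * t) k w)
      = (∑ v : Fin d → Fin k, ζ ^ (majW d k v)) ^ t := by
  have hd : 0 < d := Nat.pos_of_ne_zero (NeZero.ne d)
  set B := blockEquiv d t k hd with hB
  rw [← Equiv.sum_comp B (fun w => ζ ^ (majW (d * t) k w))]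
  have hterm : ∀ u : Fin t → Fin d → Fin k,
      ζ ^ (majW (d * t) k (B u)) = ∏ j : Fin t, ζ ^ (majW d k (u j)) := by
    intro u
    rw [Finset.prod_pow_eq_pow_sum]
    apply zeta_pow_congr hζd
    rw [majW_eq_majN, majN_blocks d t hd, Nat.cast_sum,
      ← Fin.sum_univ_eq_sum_range (fun j => ((majN d
        (fun r => if h : d * j + r < d * t then ((B u) ⟨d * j + r, h⟩ : ℕ) else 0) : ℕ) : ZMod d))]
    refine Finset.sum_congr rfl fun j _ => ?_
    congr 1
    rw [majW_eq_majN]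
    refine (majN_congr d _ _ fun r hr => ?_).symm
    have hlt : d * (j : ℕ) + r < d * t := by
      calc d * (j : ℕ) + r < d * (j : ℕ) + d := by omega
        _ = d * ((j : ℕ) + 1) := by ring
        _ ≤ d * t := Nat.mul_le_mul_left d j.isLt
    rw [dif_pos hlt, dif_pos hr]
    have hBu : (B u) ⟨d * (j : ℕ) + ((⟨r, hr⟩ : Fin d) : ℕ), by exact hlt⟩ = u j ⟨r, hr⟩ := by
      have h3 := congrFun (congrFun (B.left_inv u) j) ⟨r, hr⟩
      exact h3
    rw [← hBu]
  rw [Finset.sum_congr rfl fun u _ => hterm u]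
  rw [show (Finset.univ : Finset (Fin t → Fin d → Fin k))
      = Fintype.piFinset (fun _ => Finset.univ) from (Fintype.piFinset_univ).symm]
  have hps := Finset.prod_univ_sum (fun _ : Fin t => (Finset.univ : Finset (Fin d → Fin k)))
    (fun _ v => ζ ^ (majW d k v))
  rw [← hps, Finset.prod_const, Finset.card_univ, Fintype.card_fin]

/-- The family of CSP triples on words under rotation is Lyndon-like: for
`d ∣ n`, `f_n(e^(2πi/d)) = f_{n/d}(1)`, the number of words of length `n/d`
over `[k]` (which is also the number of words of length `n` fixed by rotation
by `n/d` steps). -/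
theorem stmt6 (n k d : ℕ) (hd : 0 < d) (hdvd : d ∣ n) :
    ∑ w : Fin n → Fin k,
        (Complex.exp (2 * Real.pi * Complex.I / d)) ^ (majW n k w)
      = (Fintype.card (Fin (n / d) → Fin k) : ℂ) := by
  haveI : NeZero d := ⟨hd.ne'⟩
  obtain ⟨t, rfl⟩ := hdvd
  have hζ : IsPrimitiveRoot (Complex.exp (2 * Real.pi * Complex.I / d)) d :=
    Complex.isPrimitiveRoot_exp d hd.ne'
  have htd : d * t / d = t := Nat.mul_div_cancel_left t hd
  rw [stage1 t _ hζ.pow_eq_one, stage2 _ hζ, htd]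
  have hcard : Fintype.card (Fin t → Fin k) = k ^ t := by
    simp [Fintype.card_fun]
  rw [hcard]
  push_cast
  rfl
end

section
/- For the crystal operators on words: if f_i(w) ≠ ∅, then the content of f_i(w) is obtained from the content of w by decreasing the number of i's by one and increasing the number of (i+1)'s by one. Consequently, the operators s̃_i defined by applying e_i or f_i suitably many times (|m_i − m_{i+1}| times) swap the multiplicities m_i and m_{i+1} of the letters i and i+1, and s̃_i is an involution. -/
/-- Bracket matching for the crystal operators: scanning `w` left to right and
viewing each letter `i+1` as `(` and each letter `i` as `)`, return the pair
(positions of unmatched `i`'s, positions of unmatched `i+1`'s), each listed in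
increasing order of position. -/
def unmatched (i : ℕ) (w : List ℕ) : List ℕ × List ℕ :=
  ((List.range w.length).zip w).foldl
    (fun acc pj =>
      if pj.2 = i + 1 then (acc.1, acc.2 ++ [pj.1])
      else if pj.2 = i then
        match acc.2 with
        | [] => (acc.1 ++ [pj.1], [])
        | _ => (acc.1, acc.2.dropLast)
      else acc)
    ([], [])

/-- The crystal raising operator `e_i`: change the leftmost unmatched `i+1`
to an `i` (undefined if there is none). -/
def eOp (i : ℕ) (w : List ℕ) : Option (List ℕ) :=
  match (unmatched i w).2 with
  | [] => none
  | p :: _ => some (w.set p i)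

/-- The crystal lowering operator `f_i`: change the rightmost unmatched `i`
to an `i+1` (undefined if there is none). -/
def fOp (i : ℕ) (w : List ℕ) : Option (List ℕ) :=
  match (unmatched i w).1.getLast? with
  | none => none
  | some p => some (w.set p (i + 1))

/-- Iterated application of a partial operator. -/
def iterOpt (g : List ℕ → Option (List ℕ)) : ℕ → List ℕ → Option (List ℕ)
  | 0, w => some w
  | k + 1, w => (g w).bind (iterOpt g k)

/-- The operator `s̃_i`: apply `e_i` (resp. `f_i`) `|m_i − m_{i+1}|` times,
where `m_j` is the multiplicity of the letter `j`. -/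
def sOp (i : ℕ) (w : List ℕ) : Option (List ℕ) :=
  if w.count i < w.count (i + 1) then iterOpt (eOp i) (w.count (i + 1) - w.count i) w
  else if w.count (i + 1) < w.count i then iterOpt (fOp i) (w.count i - w.count (i + 1)) w
  else some w

/-!
Bracket matching is compatible with concatenation: the unmatched positions of `u ++ v` are read off
from those of `u` and of `v`, the unmatched `i`'s of `v` cancelling the last unmatched `i+1`'s of
`u` (`bracketJoin`). If `f_i` changes the rightmost unmatched `i`, at position `p`, then every
`i+1` before `p` is matched and the suffix after `p` has no unmatched `i`; so after the change `p`
is the leftmost unmatched `i+1`, `e_i` changes it back, and one unmatched `i` has been lost. The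
same holds with the roles of `e_i` and `f_i` exchanged. Since the numbers of unmatched `i`'s and
`i+1`'s differ by `m_i - m_{i+1}`, the iterate defining `s̃_i` is defined; each step moves one
letter between `i` and `i+1`, so the content is swapped, and the same number of steps of the
other operator undoes it.
-/

theorem coe_append_cons_add (u v : List ℕ) (a b : ℕ) :
    ((u ++ b :: v : List ℕ) : Multiset ℕ) + {a} = (u ++ a :: v : List ℕ) + {b} := by
  rw [Multiset.coe_eq_coe.2 List.perm_middle, Multiset.coe_eq_coe.2 List.perm_middle,
    ← Multiset.cons_coe, ← Multiset.cons_coe, ← Multiset.singleton_add, ← Multiset.singleton_add]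
  abel

theorem coe_eq_map_swap_of_add_nsmul {w w' : List ℕ} {a b k : ℕ}
    (h : (w' : Multiset ℕ) + k • {a} = w + k • {b}) (hk : w.count b + k = w.count a) :
    (w' : Multiset ℕ) = (w : Multiset ℕ).map (Equiv.swap a b) := by
  ext j
  have hj := congrArg (Multiset.count j) h
  rw [← Equiv.swap_apply_self a b j, Multiset.count_map_eq_count' _ _ (Equiv.injective _)]
  simp only [Multiset.count_add, Multiset.count_nsmul, Multiset.count_singleton,
    Multiset.coe_count, Equiv.swap_apply_def] at hj ⊢
  split_ifs at hj ⊢ <;> subst_vars <;> omega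

theorem count_apply_of_coe_eq_map {w w' : List ℕ} {σ : Equiv.Perm ℕ}
    (h : (w' : Multiset ℕ) = (w : Multiset ℕ).map σ) (j : ℕ) : w'.count (σ j) = w.count j := by
  rw [← Multiset.coe_count, h, Multiset.count_map_eq_count' _ _ σ.injective, Multiset.coe_count]

section IterOpt

variable {g h : List ℕ → Option (List ℕ)}

theorem iterOpt_succ' (k : ℕ) (x : List ℕ) : iterOpt g (k + 1) x = (iterOpt g k x).bind g := by
  induction k generalizing x with
  | zero => simp [iterOpt]
  | succ k ih =>
    show (g x).bind (iterOpt g (k + 1)) = ((g x).bind (iterOpt g k)).bind g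
    simp only [ih, Option.bind_assoc]

theorem iterOpt_inverse (hgh : ∀ x y, g x = some y → h y = some x) {k : ℕ} {x y : List ℕ}
    (hxy : iterOpt g k x = some y) : iterOpt h k y = some x := by
  induction k generalizing x with
  | zero => simpa [iterOpt, eq_comm] using hxy
  | succ k ih =>
    obtain ⟨z, hz, hzy⟩ := Option.bind_eq_some_iff.1 hxy
    rw [iterOpt_succ', ih hzy, Option.bind_some, hgh _ _ hz]

theorem exists_iterOpt_eq_some (μ : List ℕ → ℕ)
    (hg : ∀ x, 0 < μ x → ∃ y, g x = some y ∧ μ y + 1 = μ x) {k : ℕ} {x : List ℕ}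
    (hk : k ≤ μ x) : ∃ y, iterOpt g k x = some y := by
  induction k generalizing x with
  | zero => exact ⟨x, rfl⟩
  | succ k ih =>
    obtain ⟨z, hz, hμ⟩ := hg x (by omega)
    obtain ⟨y, hy⟩ := ih (x := z) (by omega)
    exact ⟨y, by simp [iterOpt, hz, hy]⟩

theorem iterOpt_add_nsmul {M : Type*} [AddCommMonoid M] (φ : List ℕ → M) {a b : M}
    (hg : ∀ x y, g x = some y → φ y + a = φ x + b) {k : ℕ} {x y : List ℕ}
    (hxy : iterOpt g k x = some y) : φ y + k • a = φ x + k • b := by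
  induction k generalizing x with
  | zero => simp_all [iterOpt]
  | succ k ih =>
    obtain ⟨z, hz, hzy⟩ := Option.bind_eq_some_iff.1 hxy
    calc φ y + (k + 1) • a = φ y + k • a + a := by rw [succ_nsmul, add_assoc]
      _ = φ z + a + k • b := by rw [ih hzy, add_right_comm]
      _ = φ x + (k + 1) • b := by rw [hg _ _ hz, succ_nsmul, add_assoc, add_comm b]

end IterOpt

section Bracket

variable (i : ℕ)

def bracketStep (acc : List ℕ × List ℕ) (pj : ℕ × ℕ) : List ℕ × List ℕ :=
  if pj.2 = i + 1 then (acc.1, acc.2 ++ [pj.1])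
  else if pj.2 = i then
    match acc.2 with
    | [] => (acc.1 ++ [pj.1], [])
    | _ => (acc.1, acc.2.dropLast)
  else acc

theorem unmatched_eq_foldl (w : List ℕ) :
    unmatched i w = ((List.range w.length).zip w).foldl (bracketStep i) ([], []) := rfl

@[simp]
theorem bracketStep_succ (A B : List ℕ) (p : ℕ) :
    bracketStep i (A, B) (p, i + 1) = (A, B ++ [p]) := by
  simp [bracketStep]

@[simp]
theorem bracketStep_self_nil (A : List ℕ) (p : ℕ) :
    bracketStep i (A, []) (p, i) = (A ++ [p], []) := by
  simp [bracketStep]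

theorem bracketStep_self_of_ne_nil (A : List ℕ) {B : List ℕ} (hB : B ≠ []) (p : ℕ) :
    bracketStep i (A, B) (p, i) = (A, B.dropLast) := by
  cases B <;> simp_all [bracketStep]

theorem bracketStep_of_ne (acc : List ℕ × List ℕ) {a : ℕ} (h₁ : a ≠ i + 1) (h₂ : a ≠ i) (p : ℕ) :
    bracketStep i acc (p, a) = acc := by
  simp [bracketStep, h₁, h₂]

/-- Concatenation of reduced bracket words: the unmatched `i`'s of the second word cancel the
trailing unmatched `i+1`'s of the first. -/
def bracketJoin (S T : List ℕ × List ℕ) : List ℕ × List ℕ :=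
  (S.1 ++ T.1.drop S.2.length, S.2.take (S.2.length - T.1.length) ++ T.2)

@[simp]
theorem bracketJoin_mk_nil (A X Y : List ℕ) : bracketJoin (A, []) (X, Y) = (A ++ X, Y) := by
  simp [bracketJoin]

@[simp]
theorem bracketJoin_nil_mk (A B Y : List ℕ) : bracketJoin (A, B) ([], Y) = (A, B ++ Y) := by
  simp [bracketJoin]

theorem foldl_bracketStep (l : List (ℕ × ℕ)) (S : List ℕ × List ℕ) :
    l.foldl (bracketStep i) S = bracketJoin S (l.foldl (bracketStep i) ([], [])) := by
  obtain ⟨A, B⟩ := S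
  induction l using List.reverseRecOn with
  | nil => simp [bracketJoin]
  | append_singleton l pa ih =>
    obtain ⟨p, a⟩ := pa
    simp only [List.foldl_append, List.foldl_cons, List.foldl_nil, ih]
    generalize l.foldl (bracketStep i) ([], []) = S
    obtain ⟨X, Y⟩ := S
    by_cases ha₁ : a = i + 1
    · subst ha₁
      simp [bracketJoin]
    by_cases ha₂ : a = i
    swap
    · rw [bracketStep_of_ne _ _ ha₁ ha₂, bracketStep_of_ne _ _ ha₁ ha₂]
    subst ha₂
    rcases eq_or_ne Y [] with rfl | hY
    · rw [bracketStep_self_nil]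
      rcases lt_or_ge X.length B.length with hXB | hBX
      · have hne : B.take (B.length - X.length) ≠ [] :=
          List.ne_nil_of_length_pos (by rw [List.length_take]; omega)
        simp only [bracketJoin, List.append_nil, List.length_append, List.length_singleton]
        rw [bracketStep_self_of_ne_nil _ _ hne, List.dropLast_eq_take, List.take_take,
          List.length_take, List.drop_eq_nil_of_le hXB.le,
          List.drop_eq_nil_of_le (by rw [List.length_append, List.length_singleton]; omega)]
        congr 2
        omega
      · simp only [bracketJoin, List.length_append, List.length_singleton, List.append_nil,
          Nat.sub_eq_zero_of_le hBX, Nat.sub_eq_zero_of_le (hBX.trans (Nat.le_succ _)),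
          List.take_zero, bracketStep_self_nil, List.drop_append_of_le_length hBX,
          List.append_assoc]
    · simp only [bracketJoin]
      rw [bracketStep_self_of_ne_nil _ _ hY, bracketStep_self_of_ne_nil _ _ (by simp [hY]),
        List.dropLast_append_of_ne_nil hY]

theorem mem_of_mem_foldl_bracketStep (l : List (ℕ × ℕ)) :
    (∀ p ∈ (l.foldl (bracketStep i) ([], [])).1, (p, i) ∈ l) ∧
      ∀ p ∈ (l.foldl (bracketStep i) ([], [])).2, (p, i + 1) ∈ l := by
  induction l using List.reverseRecOn with
  | nil => simp
  | append_singleton l pa ih =>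
    obtain ⟨p, a⟩ := pa
    simp only [List.foldl_append, List.foldl_cons, List.foldl_nil]
    generalize l.foldl (bracketStep i) ([], []) = S at ih
    obtain ⟨X, Y⟩ := S
    by_cases ha₁ : a = i + 1
    · subst ha₁; simp_all [or_imp]
    by_cases ha₂ : a = i
    swap
    · simp_all [bracketStep_of_ne _ _ ha₁ ha₂]
    subst ha₂
    rcases eq_or_ne Y [] with rfl | hY
    · simp_all [or_imp]
    · rw [bracketStep_self_of_ne_nil _ _ hY]
      exact ⟨by simp_all, fun q hq => by simp [ih.2 q (List.dropLast_subset _ hq)]⟩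

theorem foldl_bracketStep_length_add_count (l : List (ℕ × ℕ)) :
    (l.foldl (bracketStep i) ([], [])).1.length + (l.map Prod.snd).count (i + 1) =
      (l.foldl (bracketStep i) ([], [])).2.length + (l.map Prod.snd).count i := by
  induction l using List.reverseRecOn with
  | nil => simp
  | append_singleton l pa ih =>
    obtain ⟨p, a⟩ := pa
    simp only [List.foldl_append, List.foldl_cons, List.foldl_nil, List.map_append,
      List.count_append, List.map_cons, List.map_nil, List.count_singleton, beq_iff_eq]
    generalize l.foldl (bracketStep i) ([], []) = S at ih
    obtain ⟨X, Y⟩ := S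
    dsimp only at ih
    by_cases ha₁ : a = i + 1
    · subst ha₁
      simp only [bracketStep_succ, List.length_append, List.length_singleton, if_true,
        if_neg (Nat.succ_ne_self i)]
      omega
    by_cases ha₂ : a = i
    swap
    · simp_all [bracketStep_of_ne _ _ ha₁ ha₂]
    subst ha₂
    simp only [if_true, if_neg (Nat.succ_ne_self a).symm]
    rcases eq_or_ne Y [] with rfl | hY
    · simp only [bracketStep_self_nil, List.length_append, List.length_singleton]
      omega
    · rw [bracketStep_self_of_ne_nil _ _ hY]
      have := List.length_pos_of_ne_nil hY
      simp only [List.length_dropLast]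
      omega

theorem range_zip_append_cons (u v : List ℕ) (x : ℕ) :
    (List.range (u ++ x :: v).length).zip (u ++ x :: v) =
      (List.range u.length).zip u ++
        (u.length, x) :: (List.range' (u.length + 1) v.length).zip v := by
  rw [List.length_append, List.length_cons, List.range_eq_range', List.range_eq_range',
    ← List.range'_append_1, List.range'_succ, List.zip_append (by simp), List.zip_cons_cons,
    Nat.zero_add]

theorem exists_eq_append_cons_of_mem_range_zip {w : List ℕ} {p a : ℕ}
    (h : (p, a) ∈ (List.range w.length).zip w) : ∃ u v, w = u ++ a :: v ∧ u.length = p := by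
  obtain ⟨k, hk, hpa⟩ := List.mem_iff_getElem.1 h
  simp only [List.getElem_zip, List.getElem_range, Prod.mk.injEq] at hpa
  obtain ⟨rfl, rfl⟩ := hpa
  have hk' : k < w.length := by simpa using hk
  refine ⟨w.take k, w.drop (k + 1), ?_, by simp [hk'.le]⟩
  rw [List.getElem_cons_drop, List.take_append_drop]

theorem unmatched_append_cons (u v : List ℕ) (x : ℕ) :
    unmatched i (u ++ x :: v) =
      ((List.range' (u.length + 1) v.length).zip v).foldl (bracketStep i)
        (bracketStep i (unmatched i u) (u.length, x)) := by
  rw [unmatched_eq_foldl, range_zip_append_cons, List.foldl_append, List.foldl_cons,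
    unmatched_eq_foldl]

theorem unmatched_length_add_count (w : List ℕ) :
    (unmatched i w).1.length + w.count (i + 1) = (unmatched i w).2.length + w.count i := by
  simpa [unmatched_eq_foldl, List.map_snd_zip] using
    foldl_bracketStep_length_add_count i ((List.range w.length).zip w)

theorem exists_unmatched_append_cons (u v : List ℕ) :
    ∃ A B X Y : List ℕ, (∀ a ∈ A ++ B, a < u.length) ∧ (∀ a ∈ X ++ Y, u.length < a) ∧
      ∀ x, unmatched i (u ++ x :: v) = bracketJoin (bracketStep i (A, B) (u.length, x)) (X, Y) := by
  have hu := mem_of_mem_foldl_bracketStep i ((List.range u.length).zip u)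
  have hv := mem_of_mem_foldl_bracketStep i ((List.range' (u.length + 1) v.length).zip v)
  rw [← unmatched_eq_foldl] at hu
  refine ⟨_, _, _, _, ?_, ?_, fun x => by rw [unmatched_append_cons, foldl_bracketStep]⟩
  · intro a ha
    rcases List.mem_append.1 ha with ha | ha
    · simpa using (List.of_mem_zip (hu.1 a ha)).1
    · simpa using (List.of_mem_zip (hu.2 a ha)).1
  · intro a ha
    rcases List.mem_append.1 ha with ha | ha
    · have := List.mem_range'_1.1 (List.of_mem_zip (hv.1 a ha)).1
      omega
    · have := List.mem_range'_1.1 (List.of_mem_zip (hv.2 a ha)).1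
      omega

end Bracket

section Crystal

variable {i : ℕ}

theorem fOp_eq_some {w w' : List ℕ} (h : fOp i w = some w') :
    ∃ u v, w = u ++ i :: v ∧ w' = u ++ (i + 1) :: v ∧ eOp i w' = some w ∧
      (unmatched i w').1.length + 1 = (unmatched i w).1.length := by
  obtain ⟨p, hp, rfl⟩ : ∃ p, (unmatched i w).1.getLast? = some p ∧ w' = w.set p (i + 1) := by
    unfold fOp at h
    split at h <;> simp_all
  obtain ⟨u, v, rfl, rfl⟩ := exists_eq_append_cons_of_mem_range_zip
    ((mem_of_mem_foldl_bracketStep i _).1 _ (List.mem_of_getLast? hp))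
  obtain ⟨A, B, X, Y, hAB, hXY, hw⟩ := exists_unmatched_append_cons i u v
  have hB : B = [] := by
    by_contra hB
    rw [hw, bracketStep_self_of_ne_nil _ _ hB] at hp
    rcases List.mem_append.1 (List.mem_of_getLast? hp) with h | h
    · exact lt_irrefl _ (hAB _ (List.mem_append_left _ h))
    · exact lt_irrefl _ (hXY _ (List.mem_append_left _ (List.mem_of_mem_drop h)))
  subst hB
  have hX : X = [] := by
    rw [hw, bracketStep_self_nil, bracketJoin_mk_nil] at hp
    rcases hx : X.getLast? with _ | x
    · exact List.getLast?_eq_none_iff.1 hx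
    · rw [List.getLast?_append, hx, Option.some_or, Option.some_inj] at hp
      exact absurd (hXY _ (List.mem_append_left _ (List.mem_of_getLast? hx))) (by omega)
  subst hX
  have h₁ := hw i
  have h₂ := hw (i + 1)
  simp only [bracketStep_self_nil, bracketStep_succ, bracketJoin_nil_mk, List.nil_append] at h₁ h₂
  refine ⟨u, v, rfl, by simp, ?_, by simp [h₁, h₂]⟩
  simp [eOp, h₂]

theorem eOp_eq_some {w w' : List ℕ} (h : eOp i w = some w') :
    ∃ u v, w = u ++ (i + 1) :: v ∧ w' = u ++ i :: v ∧ fOp i w' = some w ∧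
      (unmatched i w').2.length + 1 = (unmatched i w).2.length := by
  obtain ⟨q, rest, hq, rfl⟩ :
      ∃ q rest, (unmatched i w).2 = q :: rest ∧ w' = w.set q i := by
    unfold eOp at h
    split at h <;> simp_all
  obtain ⟨u, v, rfl, rfl⟩ := exists_eq_append_cons_of_mem_range_zip
    ((mem_of_mem_foldl_bracketStep i _).2 q (by rw [← unmatched_eq_foldl, hq]; simp))
  obtain ⟨A, B, X, Y, hAB, hXY, hw⟩ := exists_unmatched_append_cons i u v
  rw [hw, bracketStep_succ] at hq
  have hBX : B = [] ∧ X = [] := by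
    rcases Nat.eq_zero_or_pos ((B ++ [u.length]).length - X.length) with hk | hk
    · simp only [bracketJoin, hk, List.take_zero, List.nil_append] at hq
      exact absurd (hXY _ (List.mem_append_right _ (by simp [hq]))) (lt_irrefl _)
    · have hhead := congrArg List.head? hq
      simp only [bracketJoin, List.head?_append, List.head?_take, if_neg hk.ne'] at hhead
      rcases B with _ | ⟨b, B⟩
      · exact ⟨rfl, by simpa using hk⟩
      · simp only [List.head?_cons, Option.some_or] at hhead
        cases hhead
        exact absurd (hAB _ (by simp)) (lt_irrefl _)
  obtain ⟨rfl, rfl⟩ := hBX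
  have h₁ := hw i
  have h₂ := hw (i + 1)
  simp only [bracketStep_self_nil, bracketStep_succ, bracketJoin_nil_mk, List.nil_append] at h₁ h₂
  refine ⟨u, v, rfl, by simp, ?_, by simp [h₁, h₂]⟩
  simp [fOp, h₁]

theorem coe_fOp_add {w w' : List ℕ} (h : fOp i w = some w') :
    (w' : Multiset ℕ) + {i} = w + {i + 1} := by
  obtain ⟨u, v, rfl, rfl, -⟩ := fOp_eq_some h
  exact coe_append_cons_add u v i (i + 1)

theorem coe_eOp_add {w w' : List ℕ} (h : eOp i w = some w') :
    (w' : Multiset ℕ) + {i + 1} = w + {i} := by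
  obtain ⟨u, v, rfl, rfl, -⟩ := eOp_eq_some h
  exact coe_append_cons_add u v (i + 1) i

theorem exists_fOp_eq_some {w : List ℕ} (hw : (unmatched i w).1 ≠ []) :
    ∃ w', fOp i w = some w' := by
  unfold fOp
  rcases h : (unmatched i w).1.getLast? with _ | p
  · exact absurd (List.getLast?_eq_none_iff.1 h) hw
  · exact ⟨_, rfl⟩

theorem exists_eOp_eq_some {w : List ℕ} (hw : (unmatched i w).2 ≠ []) :
    ∃ w', eOp i w = some w' := by
  unfold eOp
  rcases h : (unmatched i w).2 with _ | ⟨p, rest⟩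
  · exact absurd h hw
  · exact ⟨_, rfl⟩

theorem exists_iterOpt_fOp {k : ℕ} {w : List ℕ} (hk : k ≤ (unmatched i w).1.length) :
    ∃ w', iterOpt (fOp i) k w = some w' ∧ iterOpt (eOp i) k w' = some w ∧
      (w' : Multiset ℕ) + k • {i} = w + k • {i + 1} := by
  obtain ⟨w', hw'⟩ := exists_iterOpt_eq_some (fun x => (unmatched i x).1.length) (fun x hx => by
    obtain ⟨y, hy⟩ := exists_fOp_eq_some (List.ne_nil_of_length_pos hx)
    obtain ⟨-, -, -, -, -, hlen⟩ := fOp_eq_some hy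
    exact ⟨y, hy, hlen⟩) hk
  refine ⟨w', hw', iterOpt_inverse (fun _ _ h => ?_) hw',
    iterOpt_add_nsmul _ (fun _ _ => coe_fOp_add) hw'⟩
  obtain ⟨-, -, -, -, he, -⟩ := fOp_eq_some h
  exact he

theorem exists_iterOpt_eOp {k : ℕ} {w : List ℕ} (hk : k ≤ (unmatched i w).2.length) :
    ∃ w', iterOpt (eOp i) k w = some w' ∧ iterOpt (fOp i) k w' = some w ∧
      (w' : Multiset ℕ) + k • {i + 1} = w + k • {i} := by
  obtain ⟨w', hw'⟩ := exists_iterOpt_eq_some (fun x => (unmatched i x).2.length) (fun x hx => by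
    obtain ⟨y, hy⟩ := exists_eOp_eq_some (List.ne_nil_of_length_pos hx)
    obtain ⟨-, -, -, -, -, hlen⟩ := eOp_eq_some hy
    exact ⟨y, hy, hlen⟩) hk
  refine ⟨w', hw', iterOpt_inverse (fun _ _ h => ?_) hw',
    iterOpt_add_nsmul _ (fun _ _ => coe_eOp_add) hw'⟩
  obtain ⟨-, -, -, -, hf, -⟩ := eOp_eq_some h
  exact hf

theorem exists_sOp_eq_some (i : ℕ) (w : List ℕ) :
    ∃ w', sOp i w = some w' ∧ (w' : Multiset ℕ) = (w : Multiset ℕ).map (Equiv.swap i (i + 1)) ∧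
      sOp i w' = some w := by
  have hlen := unmatched_length_add_count i w
  rcases lt_trichotomy (w.count i) (w.count (i + 1)) with hlt | heq | hgt
  · obtain ⟨w', he, hf, hc⟩ :=
      exists_iterOpt_eOp (i := i) (w := w) (k := w.count (i + 1) - w.count i) (by omega)
    have hw' := coe_eq_map_swap_of_add_nsmul hc (by omega)
    rw [Equiv.swap_comm] at hw'
    have h₀ := count_apply_of_coe_eq_map hw' i
    have h₁ := count_apply_of_coe_eq_map hw' (i + 1)
    simp only [Equiv.swap_apply_left, Equiv.swap_apply_right] at h₀ h₁
    refine ⟨w', by rw [sOp, if_pos hlt]; exact he, hw', ?_⟩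
    rw [sOp, if_neg (by omega), if_pos (by omega), h₀, h₁]
    exact hf
  · exact ⟨w, by simp [sOp, heq], coe_eq_map_swap_of_add_nsmul (k := 0) (by simp) (by omega),
      by simp [sOp, heq]⟩
  · obtain ⟨w', hf, he, hc⟩ :=
      exists_iterOpt_fOp (i := i) (w := w) (k := w.count i - w.count (i + 1)) (by omega)
    have hw' := coe_eq_map_swap_of_add_nsmul hc (by omega)
    have h₀ := count_apply_of_coe_eq_map hw' i
    have h₁ := count_apply_of_coe_eq_map hw' (i + 1)
    simp only [Equiv.swap_apply_left, Equiv.swap_apply_right] at h₀ h₁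
    refine ⟨w', by rw [sOp, if_neg (by omega), if_pos hgt]; exact hf, hw', ?_⟩
    rw [sOp, if_pos (by omega), h₀, h₁]
    exact he

end Crystal

/-- Content change under the crystal operators, and the involution `s̃_i`:
if `f_i(w) = w'` then `w'` has one fewer `i`, one more `i+1` and otherwise the
same content as `w`; consequently `s̃_i` is everywhere defined, swaps the
multiplicities of `i` and `i+1` leaving all other multiplicities unchanged,
and is an involution. -/
theorem stmt19 (i : ℕ) :
    (∀ w w' : List ℕ, fOp i w = some w' →
      w'.count i + 1 = w.count i ∧
      w'.count (i + 1) = w.count (i + 1) + 1 ∧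
      ∀ j : ℕ, j ≠ i → j ≠ i + 1 → w'.count j = w.count j) ∧
    (∀ w : List ℕ, ∃ w' : List ℕ,
      sOp i w = some w' ∧
      w'.count i = w.count (i + 1) ∧
      w'.count (i + 1) = w.count i ∧
      (∀ j : ℕ, j ≠ i → j ≠ i + 1 → w'.count j = w.count j) ∧
      sOp i w' = some w) := by
  refine ⟨fun w w' h => ?_, fun w => ?_⟩
  · have hc (j : ℕ) := congrArg (Multiset.count j) (coe_fOp_add h)
    simp only [Multiset.count_add, Multiset.coe_count, Multiset.count_singleton] at hc
    exact ⟨by simpa using hc i, by simpa using hc (i + 1),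
      fun j h₁ h₂ => by simpa [h₁, h₂] using hc j⟩
  · obtain ⟨w', hs, hc, hs'⟩ := exists_sOp_eq_some i w
    have hcount := count_apply_of_coe_eq_map hc
    refine ⟨w', hs, by simpa using hcount (i + 1), by simpa using hcount i,
      fun j h₁ h₂ => by simpa [Equiv.swap_apply_of_ne_of_ne h₁ h₂] using hcount j, hs'⟩
end
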